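/- arXiv:1302.6150 — 10 statements merged into one kernel-verified Lean document; each statement's English description precedes it below -/
import Mathlib

section
/- Let s_k denote the number of involutions of Fin k (permutations σ with σ² = 1). Then, as formal power series over ℚ, the exponential generating function identity exp(X²/2 + X) = Σ_{k≥0} s_k · X^k/k! holds, where exp denotes the formal exponential (substitution of the power series X²/2 + X, which has zero constant term, into the formal exponential series Σ_n X^n/n!). -/
/-!
Both sides solve the linear differential equation `F' = (1 + X) F` with `F(0) = 1`, and such a
solution is unique (the quotient of two solutions has derivative zero). For the left side this is
the chain rule, `expComp g` being the substitution of `g` into `exp`. For the right side it is the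
recurrence `s (n + 2) = s (n + 1) + (n + 1) s n`: an involution either fixes the point `0`, or
exchanges it with one of the `n + 1` other points, and composing with that transposition turns it
into an involution fixing both.
-/

open Finset PowerSeries

/-- The formal substitution of a power series `g` (intended to have zero constant
term) into the formal exponential series `Σ_n Xⁿ/n!` : the `n`-th coefficient is
`Σ_{m=0}^{n} (coeff n of gᵐ)/m!`, which is the full substitution since
`coeff n (gᵐ) = 0` for `m > n` when `g` has zero constant term. -/
noncomputable def expComp (g : PowerSeries ℚ) : PowerSeries ℚ :=
  PowerSeries.mk fun n =>
    ∑ m ∈ Finset.range (n + 1), (PowerSeries.coeff n (g ^ m)) / (m.factorial : ℚ)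

open Equiv

def involutionCount (n : ℕ) : ℕ := #{σ : Perm (Fin n) | σ ^ 2 = 1}

namespace Equiv.Perm

variable {α : Type*}

lemma apply_eq_of_sq_eq_one {σ : Perm α} (hσ : σ ^ 2 = 1) {x y : α} (h : σ x = y) : σ y = x := by
  rw [← h, ← mul_apply, ← sq, hσ, one_apply]

variable [DecidableEq α]

lemma sq_swap_mul_eq_one {σ : Perm α} (hσ : σ ^ 2 = 1) {x y : α}
    (h : swap (σ x) (σ y) = swap x y) : (swap x y * σ) ^ 2 = 1 := by
  have hc : Commute (swap x y) σ := ((mul_swap_eq_swap_mul σ x y).trans (by rw [h])).symm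
  rw [hc.mul_pow, hσ, sq, swap_mul_self, one_mul]

def involutionsApplyEqEquiv (x y : α) :
    {σ : Perm α // σ ^ 2 = 1 ∧ σ x = y} ≃ {σ : Perm α // σ ^ 2 = 1 ∧ σ x = x ∧ σ y = y} :=
  (Equiv.mulLeft (swap x y)).subtypeEquiv fun σ => by
    simp only [coe_mulLeft, mul_apply]
    constructor
    · rintro ⟨hσ, hx⟩
      have hy := apply_eq_of_sq_eq_one hσ hx
      refine ⟨sq_swap_mul_eq_one hσ (by rw [hx, hy, swap_comm]), ?_, ?_⟩ <;> simp [hx, hy]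
    · rintro ⟨hτ, hx, hy⟩
      have hσ := sq_swap_mul_eq_one hτ (x := x) (y := y) (by rw [mul_apply, hx, mul_apply, hy])
      rw [swap_mul_self_mul] at hσ
      exact ⟨hσ, by rwa [swap_apply_eq_iff, swap_apply_left] at hx⟩

def involutionsFixingEquiv (p : α → Prop) [DecidablePred p] :
    {τ : Perm (Subtype p) // τ ^ 2 = 1} ≃ {σ : Perm α // (∀ a, ¬p a → σ a = a) ∧ σ ^ 2 = 1} :=
  ((Perm.subtypeEquivSubtypePerm p).subtypeEquiv fun τ => by
      simp only [subtypeEquivSubtypePerm_apply_coe, ← map_pow]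
      exact (map_eq_one_iff _ ofSubtype_injective).symm).trans
    (subtypeSubtypeEquivSubtypeInter _ _)

variable [Fintype α]

theorem card_involutions :
    Fintype.card {σ : Perm α // σ ^ 2 = 1} = involutionCount (Fintype.card α) := by
  rw [involutionCount, ← Fintype.card_subtype]
  refine Fintype.card_congr ((Fintype.equivFin α).permCongrHom.toEquiv.subtypeEquiv fun σ => ?_)
  change σ ^ 2 = 1 ↔ (Fintype.equivFin α).permCongrHom σ ^ 2 = 1
  rw [← map_pow, MulEquiv.map_eq_one_iff]

theorem card_involutions_fixing (p : α → Prop) [DecidablePred p] :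
    Fintype.card {σ : Perm α // (∀ a, ¬p a → σ a = a) ∧ σ ^ 2 = 1} =
      involutionCount (Fintype.card (Subtype p)) := by
  rw [← Fintype.card_congr (involutionsFixingEquiv p), card_involutions]

theorem card_involutions_apply_self (x : α) :
    Fintype.card {σ : Perm α // σ ^ 2 = 1 ∧ σ x = x} = involutionCount (Fintype.card α - 1) := by
  rw [← Fintype.card_subtype_eq x, ← Fintype.card_subtype_compl, ← card_involutions_fixing]
  exact Fintype.card_congr (subtypeEquivRight fun σ => by simp [and_comm])

theorem card_involutions_apply_of_ne {x y : α} (hxy : x ≠ y) :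
    Fintype.card {σ : Perm α // σ ^ 2 = 1 ∧ σ x = y} = involutionCount (Fintype.card α - 2) := by
  have hcard : Fintype.card {a : α // a ≠ x ∧ a ≠ y} = Fintype.card α - 2 := by
    rw [Fintype.card_subtype, ← card_pair hxy, ← card_univ_sdiff]
    congr 1
    ext a
    simp
  rw [Fintype.card_congr (involutionsApplyEqEquiv x y), ← hcard, ← card_involutions_fixing]
  exact Fintype.card_congr (subtypeEquivRight fun σ => by grind)

theorem card_involutions_eq_sum (x : α) :
    Fintype.card {σ : Perm α // σ ^ 2 = 1} =
      ∑ y, Fintype.card {σ : Perm α // σ ^ 2 = 1 ∧ σ x = y} := by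
  simp only [Fintype.card_subtype]
  rw [card_eq_sum_card_fiberwise (f := fun σ => σ x) (t := univ) (fun _ _ => mem_univ _)]
  simp [filter_filter]

end Equiv.Perm

theorem involutionCount_add_two (n : ℕ) :
    involutionCount (n + 2) = involutionCount (n + 1) + (n + 1) * involutionCount n := by
  have := Perm.card_involutions_eq_sum (0 : Fin (n + 2))
  rw [Perm.card_involutions, Fin.sum_univ_succ, Perm.card_involutions_apply_self] at this
  simp_rw [Perm.card_involutions_apply_of_ne (Fin.succ_ne_zero _).symm] at this
  simpa [add_mul] using this

theorem involutionCount_zero : involutionCount 0 = 1 := by decide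

theorem involutionCount_one : involutionCount 1 = 1 := by decide

namespace PowerSeries

theorem coeff_pow_eq_zero_of_lt {R : Type*} [CommSemiring R] {g : R⟦X⟧}
    (hg : constantCoeff g = 0) {n m : ℕ} (h : n < m) : coeff n (g ^ m) = 0 :=
  X_pow_dvd_iff.1 (pow_dvd_pow_of_dvd (X_dvd_iff.2 hg) m) n h

theorem eq_of_derivative_eq_mul {K : Type*} [Field K] [CharZero K] {f g h : K⟦X⟧}
    (hf : d⁄dX K f = f * h) (hg : d⁄dX K g = g * h)
    (h0 : constantCoeff f = constantCoeff g) (hg0 : constantCoeff g ≠ 0) : f = g := by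
  have hinv : g * g⁻¹ = 1 := PowerSeries.mul_inv_cancel g hg0
  have hquot : f * g⁻¹ = 1 := by
    refine derivative.ext ?_ (by simp [h0, hg0])
    rw [Derivation.leibniz, derivative_inv', hf, hg, derivative_one, smul_eq_mul, smul_eq_mul]
    linear_combination (-f * g⁻¹ * h) * hinv
  calc f = f * g⁻¹ * g := by rw [mul_assoc, mul_comm g⁻¹, hinv, mul_one]
    _ = g := by rw [hquot, one_mul]

end PowerSeries

theorem expComp_eq_subst_exp {g : ℚ⟦X⟧} (hg : constantCoeff g = 0) :
    expComp g = (exp ℚ).subst g := by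
  ext n
  rw [expComp, coeff_mk, coeff_subst' (HasSubst.of_constantCoeff_zero' hg),
    finsum_eq_sum_of_support_subset (s := range (n + 1))]
  · simp [coeff_exp, div_eq_inv_mul]
  · intro m hm
    contrapose! hm
    simp [coeff_pow_eq_zero_of_lt hg (by simpa using hm)]

theorem constantCoeff_expComp (g : ℚ⟦X⟧) : constantCoeff (expComp g) = 1 := by
  rw [← coeff_zero_eq_constantCoeff_apply, expComp, coeff_mk]
  simp

theorem derivative_expComp {g : ℚ⟦X⟧} (hg : constantCoeff g = 0) :
    d⁄dX ℚ (expComp g) = expComp g * d⁄dX ℚ g := by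
  rw [expComp_eq_subst_exp hg, derivative_subst (HasSubst.of_constantCoeff_zero' hg),
    derivative_exp]

noncomputable def involutionEGF : ℚ⟦X⟧ := mk fun k => (involutionCount k : ℚ) / k.factorial

theorem constantCoeff_involutionEGF : constantCoeff involutionEGF = 1 := by
  rw [← coeff_zero_eq_constantCoeff_apply, involutionEGF, coeff_mk]
  simp [involutionCount_zero]

theorem derivative_involutionEGF : d⁄dX ℚ involutionEGF = involutionEGF * (1 + X) := by
  ext (_ | n)
  · simp [involutionEGF, coeff_derivative, involutionCount_zero, involutionCount_one]
  · rw [coeff_derivative, mul_one_add, map_add, coeff_succ_mul_X]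
    simp only [involutionEGF, coeff_mk, involutionCount_add_two]
    rw [Nat.factorial_succ (n + 1), Nat.factorial_succ n]
    push_cast
    field_simp

/-- The exponential generating function identity
`exp(X²/2 + X) = Σ_{k≥0} s_k · X^k/k!`, where `s_k` is the number of involutions
of `Fin k`. -/
theorem involution_egf :
    PowerSeries.constantCoeff (R := ℚ)
        (PowerSeries.C (R := ℚ) (1 / 2) * PowerSeries.X ^ 2 + PowerSeries.X) = 0 ∧
    expComp (PowerSeries.C (R := ℚ) (1 / 2) * PowerSeries.X ^ 2 + PowerSeries.X)
      = PowerSeries.mk (fun k =>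
          ((Finset.univ.filter fun σ : Equiv.Perm (Fin k) => σ ^ 2 = 1).card : ℚ)
            / (k.factorial : ℚ)) := by
  set g : ℚ⟦X⟧ := C (1 / 2) * X ^ 2 + X
  have hg : constantCoeff g = 0 := by simp [g]
  have hdg : d⁄dX ℚ g = 1 + X := by
    have : (C (2⁻¹ : ℚ)) * 2 = 1 := by
      rw [← map_ofNat C 2, ← map_mul, inv_mul_cancel₀ two_ne_zero, map_one]
    simp [g, ← mul_assoc, this, add_comm]
  refine ⟨hg, ?_⟩
  change expComp g = involutionEGF
  refine eq_of_derivative_eq_mul (derivative_expComp hg) (hdg ▸ derivative_involutionEGF) ?_ ?_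
  · rw [constantCoeff_expComp, constantCoeff_involutionEGF]
  · rw [constantCoeff_involutionEGF]
    exact one_ne_zero
end

section
/- For all permutations w, x of Fin k and every involution t of Fin k (t² = 1), the Saxl sign satisfies the cocycle identity S(x·w, t) = S(x, w·t·w⁻¹) · S(w, t). -/
open Finset

/-- The Saxl sign `S(w,t)`: `(-1)` raised to the number of pairs `i < j` with
`t i = i`, `t j = j` and `w i > w j`. -/
def saxlSign {k : ℕ} (w t : Equiv.Perm (Fin k)) : ℤ :=
  (-1) ^ (Finset.univ.filter (fun p : Fin k × Fin k =>
      p.1 < p.2 ∧ t p.1 = p.1 ∧ t p.2 = p.2 ∧ w p.2 < w p.1)).card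

/-!
`S(w,t)` is `(-1)` to the number of pairs of fixed points of `t` inverted by `w`, and `w` maps the
fixed points of `t` onto those of `w t w⁻¹`. A bijection `w : A → B` between finite linearly
ordered sets, read through the increasing enumerations of `A` and `B`, is a permutation of
`Fin #A` with the same number of inversions, so its sign is `(-1)` to the number of inversions of
`w` on `A`. This reading is compatible with composition, and the identity becomes the
multiplicativity of the sign.
-/

open Equiv Equiv.Perm

variable {α α' β β' γ : Type*} [LinearOrder α] [LinearOrder α'] [LinearOrder β] [LinearOrder β']
  [LinearOrder γ]

def inversionsOn (w : α → β) (A : Finset α) : Finset (α × α) :=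
  (A ×ˢ A).filter fun p => p.1 < p.2 ∧ w p.2 < w p.1

lemma inversionsOn_strictMono_comp {h : β → β'} (hh : StrictMono h) (w : α → β) (A : Finset α) :
    inversionsOn (h ∘ w) A = inversionsOn w A := by
  simp only [inversionsOn, Function.comp_apply, hh.lt_iff_lt]

lemma card_inversionsOn_comp_orderEmbedding (w : α → β) (g : α' ↪o α) (A : Finset α') :
    #(inversionsOn (w ∘ g) A) = #(inversionsOn w (A.map g.toEmbedding)) := by
  rw [inversionsOn, inversionsOn, ← prodMap_map_product, filter_map, card_map]
  simp [Function.comp_def]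

lemma signAux_eq_neg_one_pow_card_inversionsOn {m : ℕ} (σ : Perm (Fin m)) :
    (signAux σ : ℤ) = (-1) ^ #(inversionsOn σ univ) := by
  simp only [signAux, prod_ite, prod_const, one_pow, mul_one, Units.val_pow_eq_pow_val,
    Units.val_neg, Units.val_one]
  congr 1
  refine card_nbij' (fun p => (p.2, p.1)) (fun p => ⟨p.2, p.1⟩) ?_ ?_ (fun _ _ => rfl)
    (fun _ _ => rfl)
  · rintro ⟨a, b⟩ hp
    simp only [coe_filter, Set.mem_ofPred_eq, mem_finPairsLT] at hp
    simp only [inversionsOn, coe_filter, mem_product, mem_univ, true_and, Set.mem_ofPred_eq]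
    exact ⟨hp.1, hp.2.lt_of_ne fun h => hp.1.ne (σ.injective h).symm⟩
  · rintro ⟨a, b⟩ hp
    simp only [inversionsOn, coe_filter, mem_product, mem_univ, true_and, Set.mem_ofPred_eq] at hp
    simp only [coe_filter, Set.mem_ofPred_eq, mem_finPairsLT]
    exact ⟨hp.1, hp.2.le⟩

section Restrict

variable {m : ℕ} {A : Finset α} {B : Finset β} {C : Finset γ}

def finRestrict (w : α ≃ β) (hAB : ∀ a, a ∈ A ↔ w a ∈ B) (hA : #A = m) (hB : #B = m) :
    Perm (Fin m) :=
  (A.orderIsoOfFin hA).toEquiv.trans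
    ((w.subtypeEquiv hAB).trans (B.orderIsoOfFin hB).toEquiv.symm)

lemma orderEmbOfFin_finRestrict (w : α ≃ β) (hAB : ∀ a, a ∈ A ↔ w a ∈ B) (hA : #A = m)
    (hB : #B = m) (i : Fin m) :
    B.orderEmbOfFin hB (finRestrict w hAB hA hB i) = w (A.orderEmbOfFin hA i) := by
  simp [finRestrict, ← coe_orderIsoOfFin_apply]

lemma finRestrict_trans (w : α ≃ β) (x : β ≃ γ) (hAB : ∀ a, a ∈ A ↔ w a ∈ B)
    (hBC : ∀ b, b ∈ B ↔ x b ∈ C) (hA : #A = m) (hB : #B = m) (hC : #C = m) :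
    finRestrict (w.trans x) (fun a => (hAB a).trans (hBC (w a))) hA hC
      = finRestrict x hBC hB hC * finRestrict w hAB hA hB := by
  ext i
  simp [finRestrict, Perm.mul_apply]

lemma card_inversionsOn_finRestrict (w : α ≃ β) (hAB : ∀ a, a ∈ A ↔ w a ∈ B) (hA : #A = m)
    (hB : #B = m) :
    #(inversionsOn (finRestrict w hAB hA hB) univ) = #(inversionsOn w A) := by
  have hcomm : B.orderEmbOfFin hB ∘ finRestrict w hAB hA hB = w ∘ A.orderEmbOfFin hA :=
    funext (orderEmbOfFin_finRestrict w hAB hA hB)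
  rw [← inversionsOn_strictMono_comp (B.orderEmbOfFin hB).strictMono, hcomm,
    card_inversionsOn_comp_orderEmbedding, map_orderEmbOfFin_univ]

end Restrict

theorem neg_one_pow_card_inversionsOn_comp (w : α ≃ β) (x : β ≃ γ) {A : Finset α}
    {B : Finset β} (hAB : ∀ a, a ∈ A ↔ w a ∈ B) :
    (-1 : ℤ) ^ #(inversionsOn (x ∘ w) A)
      = (-1) ^ #(inversionsOn x B) * (-1) ^ #(inversionsOn w A) := by
  have hBC : ∀ b, b ∈ B ↔ x b ∈ B.map x.toEmbedding := by simp
  have hB : #B = #A := (card_equiv w hAB).symm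
  have hC : #(B.map x.toEmbedding) = #A := (card_map _).trans hB
  have hsign := congrArg (fun σ => (signAux σ : ℤ)) (finRestrict_trans w x hAB hBC rfl hB hC)
  simpa only [signAux_mul, Units.val_mul, signAux_eq_neg_one_pow_card_inversionsOn,
    card_inversionsOn_finRestrict, coe_trans] using hsign

lemma saxlSign_eq_neg_one_pow_card_inversionsOn {k : ℕ} (w t : Perm (Fin k)) :
    saxlSign w t = (-1) ^ #(inversionsOn w (univ.filter fun i => t i = i)) := by
  unfold saxlSign inversionsOn
  congr 2
  ext p
  simp only [mem_filter, mem_univ, mem_product, true_and]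
  tauto

theorem saxlSign_cocycle_general {k : ℕ} (w x t : Equiv.Perm (Fin k)) :
    saxlSign (x * w) t = saxlSign x (w * t * w⁻¹) * saxlSign w t := by
  simp only [saxlSign_eq_neg_one_pow_card_inversionsOn]
  refine neg_one_pow_card_inversionsOn_comp w x fun a => ?_
  rw [mem_filter, mem_filter]
  simp

/-- The cocycle identity for the Saxl sign:
`S(x·w, t) = S(x, w·t·w⁻¹) · S(w, t)` for any involution `t`. -/
theorem saxlSign_cocycle {k : ℕ} (w x t : Equiv.Perm (Fin k)) (ht : t ^ 2 = 1) :
    saxlSign (x * w) t = saxlSign x (w * t * w⁻¹) * saxlSign w t :=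
  saxlSign_cocycle_general w x t
end

section
/- Fix k and f, and let I^f be the set of involutions of Fin k with exactly f fixed points. Conjugation preserves I^f, and the linear maps ρ(w) on the free ℂ-module with basis I^f (finitely supported functions I^f → ℂ) defined on basis elements by ρ(w)(t) = S(w,t) • (w·t·w⁻¹) satisfy ρ(1) = id and ρ(x·w) = ρ(x) ∘ ρ(w) for all permutations x, w of Fin k; that is, signed conjugation defines a linear representation of the symmetric group on Fin k on ℂ-span of I^f. -/
open Finset

/-- The set `I^f` of involutions of `Fin k` with exactly `f` fixed points. -/
def invf (k f : ℕ) : Finset (Equiv.Perm (Fin k)) :=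
  Finset.univ.filter fun t =>
    t ^ 2 = 1 ∧ (Finset.univ.filter fun i => t i = i).card = f

/-- Signed conjugation: the linear endomorphism of the free ℂ-module on `I^f`
sending the basis element `t` to `S(w,t) • (w·t·w⁻¹)` (and to `0` in the
vacuous case that the conjugate were to leave `I^f`, which never happens). -/
noncomputable def rho (k f : ℕ) (w : Equiv.Perm (Fin k)) :
    ((invf k f) →₀ ℂ) →ₗ[ℂ] ((invf k f) →₀ ℂ) :=
  Finsupp.lift ((invf k f) →₀ ℂ) ℂ (invf k f) fun t =>
    if h : (w * t.1 * w⁻¹) ∈ invf k f then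
      (saxlSign w t.1 : ℂ) • Finsupp.single (⟨w * t.1 * w⁻¹, h⟩ : invf k f) 1
    else 0

/-!
For a permutation `w`, the pair sign `ε_w{i, j} = ±1` records whether `w` preserves or reverses
the relative order of `i` and `j`; it is `1` on the diagonal, so products of it may run over all of
`Finset.sym2`. Then `S(w, t)` is the product of `ε_w` over the pairs in the fixed-point set `Fix t`,
and `ε_{xw}{i, j} = ε_x{w i, w j} ε_w{i, j}`. Since `Fix (w t w⁻¹) = w (Fix t)`, taking products
gives the cocycle identity `S(x w, t) = S(x, w t w⁻¹) S(w, t)`, which is exactly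
`ρ(x w) = ρ(x) ρ(w)` on basis vectors.
-/

namespace Equiv.Perm

variable {α : Type*} [LinearOrder α]

def pairSign (w : Perm α) : Sym2 α → ℤ :=
  Sym2.lift ⟨fun a b => if (a < b ↔ w a < w b) then 1 else -1, fun a b => by
    rcases eq_or_ne a b with rfl | hab
    · rfl
    have hw : w a ≠ w b := w.injective.ne hab
    have hswap : (b < a ↔ w b < w a) ↔ (a < b ↔ w a < w b) := by
      rw [← not_le, ← not_le (a := w a), hab.le_iff_lt, hw.le_iff_lt, not_iff_not]
    simp only [hswap]⟩

@[simp]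
theorem pairSign_mk (w : Perm α) (a b : α) :
    w.pairSign s(a, b) = if (a < b ↔ w a < w b) then 1 else -1 :=
  rfl

theorem pairSign_one (z : Sym2 α) : pairSign 1 z = 1 := by
  induction z using Sym2.ind
  simp

theorem pairSign_mul (x w : Perm α) (z : Sym2 α) :
    (x * w).pairSign z = x.pairSign (z.map w) * w.pairSign z := by
  induction z using Sym2.ind with | h a b => ?_
  simp only [pairSign_mk, Sym2.map_mk, mul_apply]
  by_cases h₁ : a < b <;> by_cases h₂ : w a < w b <;> by_cases h₃ : x (w a) < x (w b) <;>
    simp [h₁, h₂, h₃]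

theorem prod_pairSign_mul (x w : Perm α) (A : Finset α) :
    ∏ z ∈ A.sym2, (x * w).pairSign z =
      (∏ z ∈ (A.map w.toEmbedding).sym2, x.pairSign z) * ∏ z ∈ A.sym2, w.pairSign z := by
  rw [sym2_map, prod_map, ← prod_mul_distrib]
  exact prod_congr rfl fun z _ => pairSign_mul x w z

end Equiv.Perm

theorem Finset.prod_sym2_eq_prod_lt {α M : Type*} [LinearOrder α] [CommMonoid M] (A : Finset α)
    (g : Sym2 α → M) (hg : ∀ a, g s(a, a) = 1) :
    ∏ z ∈ A.sym2, g z = ∏ p ∈ A ×ˢ A with p.1 < p.2, g s(p.1, p.2) := by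
  have hinj : Set.InjOn (fun p : α × α => s(p.1, p.2)) ↑({p ∈ A ×ˢ A | p.1 < p.2}) := by
    rintro ⟨a, b⟩ hab ⟨c, d⟩ hcd h
    simp only [coe_filter, Set.mem_ofPred_eq] at hab hcd
    rcases Sym2.eq_iff.1 h with ⟨rfl, rfl⟩ | ⟨rfl, rfl⟩
    · rfl
    · exact absurd hab.2 hcd.2.not_gt
  rw [← prod_image hinj]
  refine (prod_subset ?_ ?_).symm
  · intro z hz
    obtain ⟨p, hp, rfl⟩ := mem_image.1 hz
    rw [mem_filter, mem_product] at hp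
    exact mk_mem_sym2_iff.2 hp.1
  · intro z hz hzn
    induction z using Sym2.ind with | h a b => ?_
    rw [mk_mem_sym2_iff] at hz
    rcases lt_trichotomy a b with h | rfl | h
    · exact (hzn (mem_image.2 ⟨(a, b), mem_filter.2 ⟨mem_product.2 hz, h⟩, rfl⟩)).elim
    · exact hg a
    · exact (hzn (mem_image.2 ⟨(b, a), mem_filter.2 ⟨mem_product.2 hz.symm, h⟩,
        Sym2.eq_swap⟩)).elim

theorem filter_conj_apply_eq_map {α : Type*} [Fintype α] [DecidableEq α] (w t : Equiv.Perm α) :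
    (univ.filter fun i => (w * t * w⁻¹) i = i) =
      (univ.filter fun i => t i = i).map w.toEmbedding := by
  ext i
  simp [Equiv.Perm.inv_def, ← Equiv.eq_symm_apply]

theorem saxlSign_eq_prod_pairSign {k : ℕ} (w t : Equiv.Perm (Fin k)) :
    saxlSign w t = ∏ z ∈ (univ.filter fun i => t i = i).sym2, w.pairSign z := by
  have hsign : ∀ p : Fin k × Fin k, p.1 < p.2 →
      w.pairSign s(p.1, p.2) = if w p.2 < w p.1 then -1 else 1 := by
    intro p hlt
    rcases (w.injective.ne hlt.ne).lt_or_gt with h | h <;> simp [hlt, h, h.not_gt]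
  rw [prod_sym2_eq_prod_lt _ _ fun a => by simp,
    prod_congr rfl fun p hp => hsign p (mem_filter.1 hp).2, prod_ite, prod_const, prod_const_one,
    mul_one, saxlSign, filter_filter]
  congr 2
  ext p
  simp only [mem_filter, mem_product, mem_univ, true_and]
  tauto

theorem saxlSign_one {k : ℕ} (t : Equiv.Perm (Fin k)) : saxlSign 1 t = 1 := by
  rw [saxlSign_eq_prod_pairSign]
  exact prod_eq_one fun z _ => Equiv.Perm.pairSign_one z

theorem saxlSign_mul {k : ℕ} (x w t : Equiv.Perm (Fin k)) :
    saxlSign (x * w) t = saxlSign x (w * t * w⁻¹) * saxlSign w t := by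
  simp only [saxlSign_eq_prod_pairSign, filter_conj_apply_eq_map]
  exact Equiv.Perm.prod_pairSign_mul x w _

theorem conj_mem_invf {k f : ℕ} (w : Equiv.Perm (Fin k)) {t : Equiv.Perm (Fin k)}
    (ht : t ∈ invf k f) : w * t * w⁻¹ ∈ invf k f := by
  simp only [invf, mem_filter, mem_univ, true_and] at ht ⊢
  rw [conj_pow, ht.1, mul_one, mul_inv_cancel, filter_conj_apply_eq_map, card_map, ht.2]
  exact ⟨rfl, rfl⟩

@[simp]
theorem rho_single {k f : ℕ} (w : Equiv.Perm (Fin k)) (t : invf k f) :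
    rho k f w (Finsupp.single t 1) =
      (saxlSign w t : ℂ) • Finsupp.single ⟨w * t * w⁻¹, conj_mem_invf w t.2⟩ 1 := by
  rw [rho, Finsupp.lift_apply, Finsupp.sum_single_index (by simp), one_smul,
    dif_pos (conj_mem_invf w t.2)]

/-- Conjugation preserves `I^f`, and signed conjugation defines a linear
representation of the symmetric group on `Fin k` on the ℂ-span of `I^f`. -/
theorem saxl_model_is_representation (k f : ℕ) :
    (∀ w t : Equiv.Perm (Fin k), t ∈ invf k f → w * t * w⁻¹ ∈ invf k f) ∧
    rho k f 1 = LinearMap.id ∧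
    (∀ x w : Equiv.Perm (Fin k), rho k f (x * w) = (rho k f x) ∘ₗ (rho k f w)) := by
  refine ⟨fun w t => conj_mem_invf w, ?_, fun x w => ?_⟩
  · ext t : 2
    simp [saxlSign_one]
  · ext t : 2
    have hconj : (⟨x * w * t * (x * w)⁻¹, conj_mem_invf (x * w) t.2⟩ : invf k f) =
        ⟨x * (w * t * w⁻¹) * x⁻¹, conj_mem_invf x (conj_mem_invf w t.2)⟩ :=
      Subtype.ext (by group)
    simp only [LinearMap.comp_apply, Finsupp.lsingle_apply, rho_single, map_smul, smul_smul,
      saxlSign_mul, Int.cast_mul, hconj, mul_comm]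
end

section
/- Let t be an involution of Fin k (t² = 1) and let C(t) = {c : c·t·c⁻¹ = t} be its centralizer in the symmetric group on Fin k. If a permutation w has minimal inversion number among all elements of the coset w·C(t), i.e. inv(w) ≤ inv(w·c) for every c ∈ C(t), then w preserves the relative order of the fixed points of t: for all i < j with t(i) = i and t(j) = j one has w(i) < w(j). -/
/-! If two fixed points `i < j` of `t` had `w j < w i`, then the transposition `(i j)` would
lie in the centralizer of `t` while `w * (i j)` has strictly fewer inversions than `w`:
every inversion of `w * (i j)` is matched injectively with an inversion of `w` other than
`(i, j)`. -/

open Finset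

/-- The inversion number of a permutation of `Fin k`: the number of pairs
`i < j` with `w i > w j`. -/
def invNum {k : ℕ} (w : Equiv.Perm (Fin k)) : ℕ :=
  (Finset.univ.filter (fun p : Fin k × Fin k => p.1 < p.2 ∧ w p.2 < w p.1)).card

namespace Equiv.Perm

theorem commute_swap_of_apply_eq {α : Type*} [DecidableEq α] {t : Perm α} {i j : α}
    (hi : t i = i) (hj : t j = j) : Commute (swap i j) t := by
  have h := mul_swap_eq_swap_mul t i j
  rwa [hi, hj, eq_comm] at h

variable {α : Type*} [Fintype α] [LinearOrder α]

def inversions (w : Perm α) : Finset (α × α) :=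
  univ.filter fun p => p.1 < p.2 ∧ w p.2 < w p.1

@[simp]
theorem mem_inversions {w : Perm α} {p : α × α} :
    p ∈ w.inversions ↔ p.1 < p.2 ∧ w p.2 < w p.1 := by
  simp [inversions]

theorem invNum_eq_card_inversions {k : ℕ} (w : Perm (Fin k)) :
    invNum w = w.inversions.card :=
  rfl

variable {w : Perm α} {i j : α}

theorem notMem_inversions_mul_swap (hw : w j < w i) : (i, j) ∉ (w * swap i j).inversions := by
  simp [hw.le]

theorem mem_inversions_of_mem_inversions_mul_swap (hij : i < j) (hw : w j < w i)
    {a b : α} (hab : (a, b) ∈ (w * swap i j).inversions) (hs : ¬swap i j a < swap i j b) :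
    (a, b) ∈ w.inversions := by
  -- `swap i j` reverses `a < b` only for `(i, j)`, `(i, b)` and `(a, j)` with `i < a, b < j`;
  -- the first is no inversion of `w * swap i j`, the others are inversions of `w`.
  simp only [mem_inversions, coe_mul, Function.comp_apply, swap_apply_def] at hab hs ⊢
  split_ifs at hab hs <;> subst_vars <;> first | order | exact ⟨hab.1, by order⟩

theorem card_inversions_mul_swap_lt (hij : i < j) (hw : w j < w i) :
    (w * swap i j).inversions.card < w.inversions.card := by
  set s := swap i j
  let f : α × α → α × α := fun p => if s p.1 < s p.2 then (s p.1, s p.2) else p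
  have hmaps : ∀ p ∈ (w * s).inversions, f p ∈ w.inversions.erase (i, j) := by
    rintro ⟨a, b⟩ hp
    have hab := (mem_inversions.1 hp).1
    by_cases hs : s a < s b
    · have hne : (s a, s b) ≠ (i, j) := fun h => by
        simp only [Prod.mk.injEq, s, swap_apply_eq_iff, swap_apply_left, swap_apply_right] at h
        exact hab.asymm (h.1 ▸ h.2 ▸ hij)
      simpa [f, hs, hne] using (mem_inversions.1 hp).2
    · have hne : (a, b) ≠ (i, j) := fun h => notMem_inversions_mul_swap hw (h ▸ hp)
      simpa [f, hs, hne] using mem_inversions_of_mem_inversions_mul_swap hij hw hp hs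
  have hinj : Set.InjOn f (w * s).inversions := by
    rintro ⟨a, b⟩ hp ⟨a', b'⟩ hp' h
    have hab := (mem_inversions.1 hp).1
    have hab' := (mem_inversions.1 hp').1
    by_cases hs : s a < s b <;> by_cases hs' : s a' < s b' <;>
      simp only [f, hs, hs', if_true, if_false, Prod.mk.injEq] at h
    · exact Prod.ext (s.injective h.1) (s.injective h.2)
    · exact (hs' (by simpa [← h.1, ← h.2, s] using hab)).elim
    · exact (hs (by simpa [h.1, h.2, s] using hab')).elim
    · exact Prod.ext h.1 h.2
  calc (w * s).inversions.card ≤ (w.inversions.erase (i, j)).card :=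
        card_le_card_of_injOn f hmaps hinj
    _ < w.inversions.card := card_erase_lt_of_mem (by simp [hij, hw])

end Equiv.Perm

theorem minimal_coset_rep_preserves_fixed_point_order_general {k : ℕ}
    (t w : Equiv.Perm (Fin k))
    (hmin : ∀ c : Equiv.Perm (Fin k), c * t * c⁻¹ = t → invNum w ≤ invNum (w * c)) :
    ∀ i j : Fin k, i < j → t i = i → t j = j → w i < w j := by
  intro i j hij hi hj
  by_contra! hle
  have hw : w j < w i := hle.lt_of_ne (w.injective.ne hij.ne')
  have hcent : Equiv.swap i j * t * (Equiv.swap i j)⁻¹ = t := by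
    rw [(Equiv.Perm.commute_swap_of_apply_eq hi hj).eq, mul_inv_cancel_right]
  have hlt : invNum (w * Equiv.swap i j) < invNum w := by
    simpa only [Equiv.Perm.invNum_eq_card_inversions] using
      Equiv.Perm.card_inversions_mul_swap_lt hij hw
  exact (hmin _ hcent).not_gt hlt

/-- If `w` has minimal inversion number in its coset `w·C(t)` of the centralizer
of an involution `t`, then `w` preserves the relative order of the fixed points
of `t`. -/
theorem minimal_coset_rep_preserves_fixed_point_order {k : ℕ}
    (t w : Equiv.Perm (Fin k)) (ht : t ^ 2 = 1)
    (hmin : ∀ c : Equiv.Perm (Fin k), c * t * c⁻¹ = t → invNum w ≤ invNum (w * c)) :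
    ∀ i j : Fin k, i < j → t i = i → t j = j → w i < w j :=
  minimal_coset_rep_preserves_fixed_point_order_general t w hmin
end

section
/- Let t be an involution of Fin k (t² = 1) and let w be a permutation of Fin k with w·t·w⁻¹ = t. Then the sign of w factors as sign(w) = S(w,t) · s(w,t). -/
/-!
Sort the inversions `i < j`, `w j < w i` of `w` by the `t`-orbits of `i` and `j`: two fixed
points (counted by `S(w,t)`), the two points of one 2-cycle (counted by `s(w,t)`), or points of
distinct orbits that are not both fixed. The number of these mixed inversions is even.
Write `D(f, g)` for the number of mixed pairs ordered increasingly by `f` and decreasingly by `g`.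
Mixed pairs are closed under swapping, which makes `D` additive mod 2:
`D(f, h) ≡ D(f, g) + D(g, h)`. With `μ x = min x (t x)` this gives
`D(id, w) ≡ D(id, μ) + D(μ, μ ∘ w) + D(μ ∘ w, w)`. Since `w` commutes with `t`, it permutes the
mixed pairs, so the last term equals `D(μ, id) = D(id, μ)`; and the middle term is even, because
applying `t` to the first coordinate, or to the second one when the first is fixed by `t`, is an
involution without fixed points on the pairs it counts.
-/

open Finset

/-- The Adin–Postnikov–Roichman sign `s(w,t)`: `(-1)` raised to the number of
pairs `i < j` with `t i = j`, `t j = i` and `w i > w j`. -/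
def aprSign {k : ℕ} (w t : Equiv.Perm (Fin k)) : ℤ :=
  (-1) ^ (Finset.univ.filter (fun p : Fin k × Fin k =>
      p.1 < p.2 ∧ t p.1 = p.2 ∧ t p.2 = p.1 ∧ w p.2 < w p.1)).card

open Function

namespace Equiv.Perm

theorem sign_eq_signAux {n : ℕ} (w : Perm (Fin n)) : sign w = signAux w := by
  induction w using swap_induction_on with
  | one => rw [sign_one, signAux_one]
  | swap_mul f x y hxy ih => rw [sign_mul, signAux_mul, sign_swap hxy, signAux_swap hxy, ih]

theorem sign_eq_neg_one_pow_card_inversions {n : ℕ} (w : Perm (Fin n)) :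
    (sign w : ℤ) = (-1) ^ #{p : Fin n × Fin n | p.1 < p.2 ∧ w p.2 < w p.1} := by
  have hcard : #{x ∈ finPairsLT n | w x.1 ≤ w x.2} =
      #{p : Fin n × Fin n | p.1 < p.2 ∧ w p.2 < w p.1} := by
    refine card_equiv ((Equiv.sigmaEquivProd _ _).trans (Equiv.prodComm _ _)) fun x => ?_
    simp only [mem_filter, mem_finPairsLT, mem_univ, true_and]
    exact and_congr_right fun hlt => (w.injective.ne hlt.ne').le_iff_lt
  rw [sign_eq_signAux, signAux, prod_ite, prod_const, prod_const, one_pow, mul_one, hcard]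
  push_cast
  rfl

end Equiv.Perm

theorem Finset.even_card_of_involution {ι : Type*} {s : Finset ι} (σ : ι → ι)
    (hσ_mem : ∀ a ∈ s, σ a ∈ s) (hσσ : ∀ a ∈ s, σ (σ a) = a) (hσ_ne : ∀ a ∈ s, σ a ≠ a) :
    Even #s := by
  rw [← ZMod.natCast_eq_zero_iff_even, card_eq_sum_ones, Nat.cast_sum, Nat.cast_one]
  exact sum_involution (fun a _ => σ a) (fun _ _ => rfl) (fun a ha _ => hσ_ne a ha)
    hσ_mem hσσ

theorem Function.Involutive.even_card_pairs {α : Type*} [DecidableEq α] {t : α → α}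
    (ht : Involutive t) {s : Finset (α × α)} (hfst : ∀ p ∈ s, (t p.1, p.2) ∈ s)
    (hsnd : ∀ p ∈ s, (p.1, t p.2) ∈ s) (hmoved : ∀ p ∈ s, t p.1 ≠ p.1 ∨ t p.2 ≠ p.2) :
    Even #s := by
  refine even_card_of_involution (fun p => if t p.1 = p.1 then (p.1, t p.2) else (t p.1, p.2))
    (fun p hp => ?_) (fun p hp => ?_) (fun p hp => ?_)
  · split_ifs
    exacts [hsnd p hp, hfst p hp]
  · by_cases h : t p.1 = p.1
    · simp [h, ht _]
    · simp [h, ht _, Ne.symm h]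
  · by_cases h : t p.1 = p.1
    · simp [h, Prod.ext_iff, (hmoved p hp).resolve_left (not_not.2 h)]
    · simp [h, Prod.ext_iff]

section Discordance

variable {α β : Type*} [LinearOrder β] {s : Finset (α × α)} {f g h : α → β}

def discordantPairs (s : Finset (α × α)) (f g : α → β) : Finset (α × α) :=
  {p ∈ s | f p.1 < f p.2 ∧ g p.2 < g p.1}

theorem card_discordantPairs_comm (hs : ∀ p ∈ s, p.swap ∈ s) :
    #(discordantPairs s f g) = #(discordantPairs s g f) := by
  refine card_equiv (Equiv.prodComm α α) fun p => ?_
  simp only [discordantPairs, mem_filter, Equiv.prodComm_apply, Prod.fst_swap, Prod.snd_swap]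
  exact and_congr ⟨hs p, fun hp => p.swap_swap ▸ hs _ hp⟩ and_comm

theorem card_discordantPairs_comp (e : α ≃ α) (hs : ∀ p, Prod.map e e p ∈ s ↔ p ∈ s) :
    #(discordantPairs s (f ∘ e) (g ∘ e)) = #(discordantPairs s f g) := by
  refine card_equiv (e.prodCongr e) fun p => ?_
  simp [discordantPairs, hs]

theorem card_discordantPairs_modEq (hs : ∀ p ∈ s, p.swap ∈ s) (hf : ∀ p ∈ s, f p.1 ≠ f p.2)
    (hg : ∀ p ∈ s, g p.1 ≠ g p.2) (hh : ∀ p ∈ s, h p.1 ≠ h p.2) :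
    #(discordantPairs s f h) ≡ #(discordantPairs s f g) + #(discordantPairs s g h) [MOD 2] := by
  -- the pairs counted on the right but not on the left are those on which `g` disagrees with
  -- both `f` and `h`
  set E := {p ∈ s | f p.1 < f p.2 ∧ g p.2 < g p.1 ∧ h p.1 < h p.2}
  set E' := {p ∈ s | f p.2 < f p.1 ∧ g p.1 < g p.2 ∧ h p.2 < h p.1}
  have hE : #E = #E' := by
    refine card_equiv (Equiv.prodComm α α) fun p => ?_
    simp only [E, E', mem_filter, Equiv.prodComm_apply, Prod.fst_swap, Prod.snd_swap]
    exact and_congr ⟨hs p, fun hp => p.swap_swap ▸ hs _ hp⟩ Iff.rfl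
  have key : #(discordantPairs s f g) + #(discordantPairs s g h) =
      #(discordantPairs s f h) + #E + #E' := by
    simp only [discordantPairs, E, E', card_filter, ← sum_add_distrib]
    refine sum_congr rfl fun p hp => ?_
    rcases (hf p hp).lt_or_gt with h1 | h1 <;> rcases (hg p hp).lt_or_gt with h2 | h2 <;>
      rcases (hh p hp).lt_or_gt with h3 | h3 <;>
      simp [h1, h2, h3, h1.not_gt, h2.not_gt, h3.not_gt]
  unfold Nat.ModEq
  omega

end Discordance

section Involution

variable {α : Type*} [LinearOrder α] {t : α → α}

def orbitMin (t : α → α) (x : α) : α := min x (t x)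

theorem orbitMin_apply (ht : Involutive t) (x : α) : orbitMin t (t x) = orbitMin t x := by
  rw [orbitMin, orbitMin, ht x, min_comm]

theorem orbitMin_eq_orbitMin_iff (ht : Involutive t) {x y : α} :
    orbitMin t x = orbitMin t y ↔ y = x ∨ y = t x := by
  refine ⟨fun hxy => ?_, ?_⟩
  · unfold orbitMin at hxy
    rcases min_choice x (t x) with hx | hx <;> rcases min_choice y (t y) with hy | hy <;>
      rw [hx, hy] at hxy
    · exact .inl hxy.symm
    · exact .inr (by rw [hxy, ht])
    · exact .inr hxy.symm
    · exact .inl (ht.injective hxy.symm)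
  · rintro (rfl | rfl)
    exacts [rfl, (orbitMin_apply ht x).symm]

section MixedPairs

variable [Fintype α]

def mixedPairs (t : α → α) : Finset (α × α) :=
  {p | orbitMin t p.1 ≠ orbitMin t p.2 ∧ (t p.1 ≠ p.1 ∨ t p.2 ≠ p.2)}

theorem swap_mem_mixedPairs {p : α × α} (hp : p ∈ mixedPairs t) : p.swap ∈ mixedPairs t := by
  simp only [mixedPairs, mem_filter_univ, Prod.fst_swap, Prod.snd_swap] at hp ⊢
  exact ⟨hp.1.symm, hp.2.symm⟩

theorem map_mem_mixedPairs_iff (ht : Involutive t) {w : α ≃ α} (hwt : Function.Commute w t)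
    (p : α × α) :
    Prod.map w w p ∈ mixedPairs t ↔ p ∈ mixedPairs t := by
  simp only [mixedPairs, mem_filter_univ, Prod.map_fst, Prod.map_snd, ne_eq,
    orbitMin_eq_orbitMin_iff ht, ← hwt _, w.injective.eq_iff]

theorem mk_apply_fst_mem_mixedPairs (ht : Involutive t) {p : α × α} (hp : p ∈ mixedPairs t) :
    (t p.1, p.2) ∈ mixedPairs t := by
  simp only [mixedPairs, mem_filter_univ, orbitMin_apply ht, ht p.1] at hp ⊢
  exact ⟨hp.1, hp.2.imp_left fun h => by rwa [ne_comm]⟩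

theorem mk_apply_snd_mem_mixedPairs (ht : Involutive t) {p : α × α} (hp : p ∈ mixedPairs t) :
    (p.1, t p.2) ∈ mixedPairs t :=
  swap_mem_mixedPairs (mk_apply_fst_mem_mixedPairs ht (swap_mem_mixedPairs hp))

theorem card_inversions_eq_fixed_add_paired_add_mixed (ht : Involutive t) (w : α → α) :
    #{p : α × α | p.1 < p.2 ∧ w p.2 < w p.1} =
      #{p : α × α | p.1 < p.2 ∧ t p.1 = p.1 ∧ t p.2 = p.2 ∧ w p.2 < w p.1} +
      #{p : α × α | p.1 < p.2 ∧ t p.1 = p.2 ∧ t p.2 = p.1 ∧ w p.2 < w p.1} +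
      #(discordantPairs (mixedPairs t) id w) := by
  set A : Finset (α × α) := {p | p.1 < p.2 ∧ t p.1 = p.1 ∧ t p.2 = p.2 ∧ w p.2 < w p.1}
  set B : Finset (α × α) := {p | p.1 < p.2 ∧ t p.1 = p.2 ∧ t p.2 = p.1 ∧ w p.2 < w p.1}
  have hsplit : ({p | p.1 < p.2 ∧ w p.2 < w p.1} : Finset (α × α)) =
      A ∪ B ∪ discordantPairs (mixedPairs t) id w := by
    ext p
    simp only [A, B, discordantPairs, mixedPairs, mem_union, mem_filter, mem_univ, true_and, ne_eq,
      orbitMin_eq_orbitMin_iff ht, id]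
    constructor
    · rintro ⟨hlt, hw⟩
      by_cases hfix : t p.1 = p.1 ∧ t p.2 = p.2
      · exact .inl (.inl ⟨hlt, hfix.1, hfix.2, hw⟩)
      by_cases hpair : t p.1 = p.2
      · exact .inl (.inr ⟨hlt, hpair, by rw [← hpair, ht], hw⟩)
      refine .inr ⟨⟨?_, not_and_or.1 hfix⟩, hlt, hw⟩
      rintro (h | h)
      exacts [hlt.ne' h, hpair h.symm]
    · rintro ((⟨hlt, -, -, hw⟩ | ⟨hlt, -, -, hw⟩) | ⟨-, hlt, hw⟩) <;> exact ⟨hlt, hw⟩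
  rw [hsplit, card_union_of_disjoint, card_union_of_disjoint]
  · refine disjoint_left.2 fun p hA hB => ?_
    simp only [A, B, mem_filter_univ] at hA hB
    exact hA.1.ne (hA.2.1.symm.trans hB.2.1)
  · refine disjoint_left.2 fun p hAB hG => ?_
    simp only [A, B, discordantPairs, mixedPairs, mem_union, mem_filter, mem_univ, true_and, ne_eq,
      orbitMin_eq_orbitMin_iff ht] at hAB hG
    rcases hAB with ⟨-, hfix₁, hfix₂, -⟩ | ⟨-, hpair, -⟩
    · exact hG.1.2.elim (· hfix₁) (· hfix₂)
    · exact hG.1.1 (.inr hpair.symm)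

theorem even_card_discordantPairs_id_mixedPairs (ht : Involutive t) {w : Equiv.Perm α}
    (hwt : Function.Commute w t) : Even #(discordantPairs (mixedPairs t) id w) := by
  have hswap : ∀ p ∈ mixedPairs t, p.swap ∈ mixedPairs t := fun _ => swap_mem_mixedPairs
  have hmin : ∀ p ∈ mixedPairs t, orbitMin t p.1 ≠ orbitMin t p.2 :=
    fun p hp => ((mem_filter_univ p).1 hp).1
  have hid : ∀ p ∈ mixedPairs t, id p.1 ≠ id p.2 :=
    fun p hp h => hmin p hp (congrArg (orbitMin t) h)
  have hw : ∀ p ∈ mixedPairs t, w p.1 ≠ w p.2 := fun p hp => w.injective.ne (hid p hp)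
  have hminw : ∀ p ∈ mixedPairs t, (orbitMin t ∘ w) p.1 ≠ (orbitMin t ∘ w) p.2 :=
    fun p hp => hmin _ ((map_mem_mixedPairs_iff ht hwt p).2 hp)
  have hcocycle₁ := card_discordantPairs_modEq hswap hid hmin hw
  have hcocycle₂ := card_discordantPairs_modEq hswap hmin hminw hw
  have htransport : #(discordantPairs (mixedPairs t) (orbitMin t ∘ w) w) =
      #(discordantPairs (mixedPairs t) id (orbitMin t)) :=
    (card_discordantPairs_comp (g := id) w (map_mem_mixedPairs_iff ht hwt)).trans
      (card_discordantPairs_comm hswap)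
  have heven : Even #(discordantPairs (mixedPairs t) (orbitMin t) (orbitMin t ∘ w)) := by
    have hminw_apply : ∀ x, (orbitMin t ∘ w) (t x) = (orbitMin t ∘ w) x := fun x => by
      simp only [comp_apply, hwt x, orbitMin_apply ht]
    refine ht.even_card_pairs (fun p hp => ?_) (fun p hp => ?_)
      fun p hp => ((mem_filter_univ p).1 (mem_filter.1 hp).1).2
    all_goals simp only [discordantPairs, mem_filter] at hp ⊢
    · simpa only [orbitMin_apply ht, hminw_apply] using ⟨mk_apply_fst_mem_mixedPairs ht hp.1, hp.2⟩
    · simpa only [orbitMin_apply ht, hminw_apply] using ⟨mk_apply_snd_mem_mixedPairs ht hp.1, hp.2⟩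
  rw [Nat.even_iff] at heven ⊢
  unfold Nat.ModEq at hcocycle₁ hcocycle₂
  omega

end MixedPairs

end Involution

/-- If `t` is an involution and `w` centralizes `t`, then
`sign(w) = S(w,t) · s(w,t)`. -/
theorem sign_eq_saxlSign_mul_aprSign {k : ℕ} (t w : Equiv.Perm (Fin k))
    (ht : t ^ 2 = 1) (hw : w * t * w⁻¹ = t) :
    (Equiv.Perm.sign w : ℤ) = saxlSign w t * aprSign w t := by
  have ht' : Involutive t := fun x => DFunLike.congr_fun ht x
  have hwt : Function.Commute w t := fun x => DFunLike.congr_fun (mul_inv_eq_iff_eq_mul.mp hw) x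
  rw [Equiv.Perm.sign_eq_neg_one_pow_card_inversions,
    card_inversions_eq_fixed_add_paired_add_mixed ht', pow_add, pow_add,
    (even_card_discordantPairs_id_mixedPairs ht' hwt).neg_one_pow, mul_one]
  rfl
end

section
/- Fix k, r, ℓ ∈ ℕ with 2ℓ ≤ r ≤ k. The number of triples (σ, C, E), where σ is an involution of Fin k, C is a subset of the set of 2-cycles of σ such that σ has exactly ℓ + |C| two-element orbits, and E is a subset of the fixed-point set of σ such that the number of fixed points of σ not in E equals r − 2ℓ, equals Σ_{c=0}^{⌊(k−r)/2⌋} C(k, r)·C(k−r, 2c)·(2c−1)!!·C(r, 2ℓ)·(2ℓ−1)!!. (Such triples are in bijection with the vertically symmetric rook-Brauer diagrams on k vertices of rank r with ℓ transpositions, |C| contractions, r − 2ℓ fixed points, and |E| pairs of empty vertices.) -/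
/-!
Grouping the triples by `σ`: an involution with `m` two-cycles admits `C(m, ℓ) · C(k - 2m, r - 2ℓ)`
choices of `(C, E)`, and there are `C(k, 2m) · (2m - 1)!!` such involutions (the count of
permutations of cycle type `2^m`). Only `m = ℓ + c` with `2c ≤ k - r` contributes, and then the
summand is the `c`-th term of the right-hand side: both count splittings of the `k` points into
blocks of sizes `2ℓ`, `r - 2ℓ`, `2c`, `k - r - 2c` with perfect matchings on the first and third.
-/

open Finset

/-- The set of 2-cycles of a permutation `σ` of `Fin k`, encoded as ordered
pairs `(i, j)` with `i < j`, `σ i = j` and `σ j = i`. -/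
def twoCycles {k : ℕ} (σ : Equiv.Perm (Fin k)) : Finset (Fin k × Fin k) :=
  Finset.univ.filter fun p => p.1 < p.2 ∧ σ p.1 = p.2 ∧ σ p.2 = p.1

def fixedPts {k : ℕ} (σ : Equiv.Perm (Fin k)) : Finset (Fin k) :=
  Finset.univ.filter fun i => σ i = i

open Nat

namespace Nat

theorem two_pow_mul_factorial_mul_doubleFactorial (n : ℕ) :
    2 ^ n * n ! * (2 * n - 1)‼ = (2 * n)! := by
  rcases n with _ | n
  · rfl
  · rw [← doubleFactorial_two_mul, show 2 * (n + 1) = 2 * n + 1 + 1 by ring,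
      factorial_eq_mul_doubleFactorial, Nat.add_sub_cancel]

theorem doubleFactorial_mul_choose (a b : ℕ) :
    (2 * (a + b) - 1)‼ * (a + b).choose a =
      (2 * (a + b)).choose (2 * a) * (2 * a - 1)‼ * (2 * b - 1)‼ := by
  have hpos : 0 < 2 ^ (a + b) * a ! * b ! := by positivity
  apply Nat.eq_of_mul_eq_mul_right hpos
  calc (2 * (a + b) - 1)‼ * (a + b).choose a * (2 ^ (a + b) * a ! * b !)
      = 2 ^ (a + b) * ((a + b).choose a * a ! * b !) * (2 * (a + b) - 1)‼ := by ring
    _ = (2 * (a + b))! := by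
        rw [choose_symm_add, add_choose_mul_factorial_mul_factorial,
          two_pow_mul_factorial_mul_doubleFactorial]
    _ = (2 * (a + b)).choose (2 * a) * (2 * a)! * (2 * b)! := by
        rw [mul_add, choose_symm_add, add_choose_mul_factorial_mul_factorial]
    _ = _ := by
        rw [← two_pow_mul_factorial_mul_doubleFactorial a,
          ← two_pow_mul_factorial_mul_doubleFactorial b]
        ring

theorem choose_mul_choose_sub_comm (n q s : ℕ) :
    n.choose q * (n - q).choose s = n.choose s * (n - s).choose q := by
  have hq := choose_mul (n := n) (le_add_right q s)
  have hs := choose_mul (n := n) (le_add_left s q)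
  rw [Nat.add_sub_cancel_left] at hq
  rw [Nat.add_sub_cancel] at hs
  rw [← hq, ← hs, choose_symm_add]

end Nat

namespace Equiv.Perm

theorem apply_apply_of_sq_eq_one {α : Type*} {σ : Perm α} (hσ : σ ^ 2 = 1) (i : α) :
    σ (σ i) = i := by
  simpa [sq] using congrArg (· i) hσ

variable {α : Type*} [Fintype α] [DecidableEq α]

theorem cycleType_eq_replicate_two_iff (σ : Perm α) (m : ℕ) :
    σ.cycleType = Multiset.replicate m 2 ↔ σ ^ 2 = 1 ∧ #σ.support = 2 * m := by
  constructor
  · intro h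
    refine ⟨?_, ?_⟩
    · rw [← orderOf_dvd_iff_pow_eq_one, ← lcm_cycleType, h]
      exact Multiset.lcm_dvd.2 fun b hb => (Multiset.eq_of_mem_replicate hb).dvd
    · rw [← sum_cycleType, h, Multiset.sum_replicate, smul_eq_mul, mul_comm]
  · rintro ⟨hsq, hcard⟩
    have htwo : ∀ n ∈ σ.cycleType, n = 2 := fun n hn =>
      le_antisymm (Nat.le_of_dvd two_pos
          ((dvd_of_mem_cycleType hn).trans (orderOf_dvd_of_pow_eq_one hsq)))
        (two_le_of_mem_cycleType hn)
    have hrep := Multiset.eq_replicate_card.2 htwo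
    rw [hrep]
    congr
    have := sum_cycleType σ
    rw [hrep, Multiset.sum_replicate, smul_eq_mul, hcard] at this
    omega

theorem card_sq_eq_one_and_card_support_eq (m : ℕ) :
    #{σ : Perm α | σ ^ 2 = 1 ∧ #σ.support = 2 * m} =
      (Fintype.card α).choose (2 * m) * (2 * m - 1)‼ := by
  simp_rw [← cycleType_eq_replicate_two_iff, card_of_cycleType]
  have hprod : ∏ n ∈ (Multiset.replicate m 2).toFinset,
      (Multiset.count n (Multiset.replicate m 2))! = m ! := by
    rcases Nat.eq_zero_or_pos m with rfl | hm
    · rfl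
    · rw [Multiset.toFinset_replicate, if_neg hm.ne', prod_singleton,
        Multiset.count_replicate_self]
  by_cases h : 2 * m ≤ Fintype.card α
  · rw [if_pos ⟨by simpa [mul_comm m 2] using h, fun a ha => (Multiset.eq_of_mem_replicate ha).ge⟩,
      Multiset.sum_replicate, Multiset.prod_replicate,
      hprod, smul_eq_mul, mul_comm m 2]
    apply Nat.div_eq_of_eq_mul_left (by positivity)
    calc (Fintype.card α)!
          = (Fintype.card α).choose (2 * m) * (2 * m)! * (Fintype.card α - 2 * m)! :=
        (choose_mul_factorial_mul_factorial h).symm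
      _ = _ := by rw [← two_pow_mul_factorial_mul_doubleFactorial]; ring
  · rw [if_neg fun hc => h (by simpa [mul_comm m 2] using hc.1), choose_eq_zero_of_lt (by omega),
      zero_mul]

end Equiv.Perm

section TwoCycles

variable {k : ℕ} {σ : Equiv.Perm (Fin k)}

theorem mem_twoCycles {p : Fin k × Fin k} :
    p ∈ twoCycles σ ↔ p.1 < p.2 ∧ σ p.1 = p.2 ∧ σ p.2 = p.1 := by
  simp [twoCycles]

theorem fixedPts_eq_compl_support (σ : Equiv.Perm (Fin k)) : fixedPts σ = σ.supportᶜ := by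
  ext i
  simp [fixedPts]

theorem card_twoCycles_of_sq_eq_one (hσ : σ ^ 2 = 1) :
    #(twoCycles σ) = #{i | i < σ i} := by
  apply card_nbij' Prod.fst (fun i => (i, σ i))
  · intro p hp
    obtain ⟨hlt, h1, -⟩ := mem_twoCycles.1 hp
    simpa [h1] using hlt
  · intro i hi
    simpa [mem_twoCycles, Equiv.Perm.apply_apply_of_sq_eq_one hσ] using hi
  · intro p hp
    obtain ⟨-, h1, -⟩ := mem_twoCycles.1 hp
    simp [h1]
  · intro i _
    rfl

theorem two_mul_card_twoCycles (hσ : σ ^ 2 = 1) :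
    2 * #(twoCycles σ) = #σ.support := by
  have hswap : #{i | σ i < i} = #{i | i < σ i} := by
    apply card_nbij' σ σ <;> intro i <;> simp [Equiv.Perm.apply_apply_of_sq_eq_one hσ]
  have hsupp : σ.support = univ.filter (fun i => i < σ i) ∪ univ.filter (fun i => σ i < i) := by
    ext i
    simpa [or_comm] using ne_iff_lt_or_gt (a := σ i) (b := i)
  rw [hsupp, card_union_of_disjoint, hswap, card_twoCycles_of_sq_eq_one hσ, two_mul]
  exact disjoint_filter.2 fun i _ h => h.asymm

end TwoCycles

theorem Finset.card_powerset_filter_card_sdiff {α : Type*} [DecidableEq α] (s : Finset α)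
    (j : ℕ) : #{t ∈ s.powerset | #(s \ t) = j} = (#s).choose j := by
  rw [← card_powersetCard]
  apply card_nbij' (s \ ·) (s \ ·) <;> intro t ht <;> simp_all

theorem card_subset_pairs_eq_choose_mul_choose {α β : Type*} [Fintype α] [Fintype β]
    [DecidableEq α] [DecidableEq β]
    (T : Finset α) (F : Finset β) (ℓ j : ℕ) :
    #{y : Finset α × Finset β | y.1 ⊆ T ∧ #T = ℓ + #y.1 ∧ y.2 ⊆ F ∧ #(F \ y.2) = j} =
      (#T).choose ℓ * (#F).choose j := by
  have hsplit : ({y : Finset α × Finset β | y.1 ⊆ T ∧ #T = ℓ + #y.1 ∧ y.2 ⊆ F ∧ #(F \ y.2) = j}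
      : Finset _) = {C ∈ T.powerset | #(T \ C) = ℓ} ×ˢ {E ∈ F.powerset | #(F \ E) = j} := by
    ext ⟨C, E⟩
    simp only [mem_filter, mem_univ, true_and, mem_product, mem_powerset]
    constructor
    · rintro ⟨hC, hT, hE, hF⟩
      exact ⟨⟨hC, by rw [card_sdiff_of_subset hC]; omega⟩, hE, hF⟩
    · rintro ⟨⟨hC, hT⟩, hE, hF⟩
      rw [card_sdiff_of_subset hC] at hT
      exact ⟨hC, by have := card_le_card hC; omega, hE, hF⟩
  rw [hsplit, card_product, card_powerset_filter_card_sdiff, card_powerset_filter_card_sdiff]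

theorem card_triples_eq_sum_involutions (k ℓ j : ℕ) :
    #{x : Equiv.Perm (Fin k) × Finset (Fin k × Fin k) × Finset (Fin k) |
        x.1 ^ 2 = 1 ∧ x.2.1 ⊆ twoCycles x.1 ∧ #(twoCycles x.1) = ℓ + #x.2.1 ∧
          x.2.2 ⊆ fixedPts x.1 ∧ #(fixedPts x.1 \ x.2.2) = j} =
      ∑ σ ∈ {σ : Equiv.Perm (Fin k) | σ ^ 2 = 1},
        (#(twoCycles σ)).choose ℓ * (k - 2 * #(twoCycles σ)).choose j := by
  rw [card_eq_sum_card_fiberwise (f := Prod.fst) (t := {σ | σ ^ 2 = 1}) fun x hx => by simp_all]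
  refine sum_congr rfl fun σ hσ => ?_
  have hσ : σ ^ 2 = 1 := by simpa using hσ
  have hfix : #(fixedPts σ) = k - 2 * #(twoCycles σ) := by
    rw [fixedPts_eq_compl_support, card_compl, Fintype.card_fin, two_mul_card_twoCycles hσ]
  rw [← hfix, ← card_subset_pairs_eq_choose_mul_choose]
  apply card_nbij' Prod.snd (Prod.mk σ)
  · rintro ⟨τ, y⟩ hy
    simp only [mem_coe, mem_filter, mem_univ, true_and] at hy
    obtain ⟨⟨-, hy⟩, rfl⟩ := hy
    simpa using hy
  · intro y hy
    simp_all
  · rintro ⟨τ, y⟩ hy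
    simp_all
  · intro y _
    rfl

theorem sum_involutions_eq_sum_range (k : ℕ) (f : ℕ → ℕ) :
    ∑ σ ∈ {σ : Equiv.Perm (Fin k) | σ ^ 2 = 1}, f #(twoCycles σ) =
      ∑ m ∈ range (k + 1), k.choose (2 * m) * (2 * m - 1)‼ * f m := by
  have hmaps : ∀ σ ∈ ({σ : Equiv.Perm (Fin k) | σ ^ 2 = 1} : Finset _),
      #(twoCycles σ) ∈ range (k + 1) := by
    intro σ hσ
    have h := two_mul_card_twoCycles (by simpa using hσ)
    have := card_le_univ σ.support
    simp only [Fintype.card_fin] at this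
    rw [mem_range]
    omega
  rw [← sum_fiberwise_of_maps_to' hmaps f]
  refine sum_congr rfl fun m _ => ?_
  have hcount := Equiv.Perm.card_sq_eq_one_and_card_support_eq (α := Fin k) m
  rw [Fintype.card_fin] at hcount
  rw [sum_const, smul_eq_mul, filter_filter, ← hcount]
  congr 2
  ext σ
  simp only [mem_filter, mem_univ, true_and]
  constructor
  · rintro ⟨hσ, rfl⟩
    exact ⟨hσ, (two_mul_card_twoCycles hσ).symm⟩
  · rintro ⟨hσ, hm⟩
    refine ⟨hσ, ?_⟩
    have := two_mul_card_twoCycles hσ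
    omega

theorem Finset.sum_range_eq_sum_range_add {M : Type*} [AddCommMonoid M] {f : ℕ → M}
    {a n N : ℕ} (hf : ∀ m, f m ≠ 0 → m < N ∧ a ≤ m ∧ m < a + n) :
    ∑ m ∈ range N, f m = ∑ c ∈ range n, f (a + c) := by
  classical
  have hIco := sum_Ico_eq_sum_range f a (a + n)
  rw [Nat.add_sub_cancel_left] at hIco
  rw [← hIco, ← sum_filter_ne_zero, ← sum_filter_ne_zero (s := Ico a (a + n))]
  congr 1
  ext m
  simp only [mem_filter, mem_range, mem_Ico]
  constructor
  · rintro ⟨-, hm⟩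
    exact ⟨(hf m hm).2, hm⟩
  · rintro ⟨-, hm⟩
    exact ⟨(hf m hm).1, hm⟩

theorem Nat.choose_mul_doubleFactorial_mul_choose_mul_choose {k r ℓ c : ℕ} (hℓ : 2 * ℓ ≤ r) :
    k.choose (2 * (ℓ + c)) * (2 * (ℓ + c) - 1)‼ *
        ((ℓ + c).choose ℓ * (k - 2 * (ℓ + c)).choose (r - 2 * ℓ)) =
      k.choose r * (k - r).choose (2 * c) * (2 * c - 1)‼ * r.choose (2 * ℓ) * (2 * ℓ - 1)‼ := by
  have hblocks : k.choose (2 * (ℓ + c)) * (2 * (ℓ + c)).choose (2 * ℓ) *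
      (k - 2 * (ℓ + c)).choose (r - 2 * ℓ) =
        k.choose r * r.choose (2 * ℓ) * (k - r).choose (2 * c) := by
    rw [choose_mul (by omega), choose_mul hℓ, mul_assoc, mul_assoc,
      show 2 * (ℓ + c) - 2 * ℓ = 2 * c by omega, show k - 2 * (ℓ + c) = k - 2 * ℓ - 2 * c by omega,
      choose_mul_choose_sub_comm, show k - 2 * ℓ - (r - 2 * ℓ) = k - r by omega]
  calc _ = k.choose (2 * (ℓ + c)) * ((2 * (ℓ + c) - 1)‼ * (ℓ + c).choose ℓ) *
        (k - 2 * (ℓ + c)).choose (r - 2 * ℓ) := by ring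
    _ = k.choose (2 * (ℓ + c)) * (2 * (ℓ + c)).choose (2 * ℓ) *
        (k - 2 * (ℓ + c)).choose (r - 2 * ℓ) * (2 * ℓ - 1)‼ * (2 * c - 1)‼ := by
      rw [doubleFactorial_mul_choose]; ring
    _ = _ := by rw [hblocks]; ring

theorem symmetric_rook_brauer_diagram_count_general (k r ℓ : ℕ)
    (hℓ : 2 * ℓ ≤ r) :
    (Finset.univ.filter
        (fun x : Equiv.Perm (Fin k) × Finset (Fin k × Fin k) × Finset (Fin k) =>
          x.1 ^ 2 = 1 ∧ x.2.1 ⊆ twoCycles x.1 ∧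
          (twoCycles x.1).card = ℓ + x.2.1.card ∧
          x.2.2 ⊆ fixedPts x.1 ∧ (fixedPts x.1 \ x.2.2).card = r - 2 * ℓ)).card
    = ∑ c ∈ Finset.range ((k - r) / 2 + 1),
        Nat.choose k r * Nat.choose (k - r) (2 * c) *
          Nat.doubleFactorial (2 * c - 1) * Nat.choose r (2 * ℓ) *
          Nat.doubleFactorial (2 * ℓ - 1) := by
  rw [card_triples_eq_sum_involutions,
    sum_involutions_eq_sum_range k fun m => m.choose ℓ * (k - 2 * m).choose (r - 2 * ℓ),
    sum_range_eq_sum_range_add (a := ℓ)]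
  · exact sum_congr rfl fun c _ => choose_mul_doubleFactorial_mul_choose_mul_choose hℓ
  · intro m hm
    simp only [ne_eq, mul_eq_zero, choose_eq_zero_iff, not_or, not_lt] at hm
    omega

/-- The number of triples `(σ, C, E)`, where `σ` is an involution of `Fin k`,
`C` is a subset of the 2-cycles of `σ` such that `σ` has exactly `ℓ + |C|`
2-cycles, and `E` is a subset of the fixed points of `σ` such that exactly
`r - 2ℓ` fixed points lie outside `E`, equals
`Σ_{c=0}^{⌊(k-r)/2⌋} C(k,r)·C(k-r,2c)·(2c-1)!!·C(r,2ℓ)·(2ℓ-1)!!`.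
These triples are in bijection with the vertically symmetric rook-Brauer
diagrams on `k` vertices of rank `r` with `ℓ` transpositions. -/
theorem symmetric_rook_brauer_diagram_count (k r ℓ : ℕ)
    (hℓ : 2 * ℓ ≤ r) (hr : r ≤ k) :
    (Finset.univ.filter
        (fun x : Equiv.Perm (Fin k) × Finset (Fin k × Fin k) × Finset (Fin k) =>
          x.1 ^ 2 = 1 ∧ x.2.1 ⊆ twoCycles x.1 ∧
          (twoCycles x.1).card = ℓ + x.2.1.card ∧
          x.2.2 ⊆ fixedPts x.1 ∧ (fixedPts x.1 \ x.2.2).card = r - 2 * ℓ)).card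
    = ∑ c ∈ Finset.range ((k - r) / 2 + 1),
        Nat.choose k r * Nat.choose (k - r) (2 * c) *
          Nat.doubleFactorial (2 * c - 1) * Nat.choose r (2 * ℓ) *
          Nat.doubleFactorial (2 * ℓ - 1) :=
  symmetric_rook_brauer_diagram_count_general k r ℓ hℓ
end

section
/- Let b_i = Σ_{m=0}^{⌊i/2⌋} C(i, 2m)·(2m)!/m! and let rb_k = Σ_{i=0}^{k} C(k, i)·b_i (the number of vertically symmetric rook-Brauer diagrams on k vertices). Then, as formal power series over ℚ, exp(X² + 2X) = Σ_{k≥0} rb_k · X^k/k!, where exp denotes the formal exponential (substitution of the power series X² + 2X, which has zero constant term, into the formal exponential series Σ_n X^n/n!). -/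
open Finset PowerSeries

/-- `b_i`, the number of vertically symmetric Brauer diagrams on `i` strands. -/
def brauerModelDim (i : ℕ) : ℕ :=
  ∑ m ∈ Finset.range (i / 2 + 1),
    Nat.choose i (2 * m) * ((2 * m).factorial / m.factorial)

/-- `rb_k = Σ_{i=0}^{k} C(k,i)·b_i`, the number of vertically symmetric
rook-Brauer diagrams on `k` vertices. -/
def rookBrauerModelDim (k : ℕ) : ℕ :=
  ∑ i ∈ Finset.range (k + 1), Nat.choose k i * brauerModelDim i

/-! Since `X² + cX = X (X + c)`, the `n`-th coefficient of `(X² + cX)^(n - a)` is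
`C(n - a, a) c^(n - 2a)`, so the `n`-th coefficient of `expComp (X² + cX)` is
`Σ_a c^(n - 2a) / (a! (n - 2a)!)`. For `c = 2` this is also `rb_n / n!`, because
summing out `i` with `Σ_i C(n, i) C(i, k) = C(n, k) 2^(n - k)` leaves
`rb_n = Σ_a C(n, 2a) (2a)!/a! 2^(n - 2a)`. -/

theorem Nat.sum_range_choose_mul_choose (n k : ℕ) :
    ∑ i ∈ range (n + 1), n.choose i * i.choose k = n.choose k * 2 ^ (n - k) := by
  rcases lt_or_ge n k with hnk | hkn
  · rw [Nat.choose_eq_zero_of_lt hnk, zero_mul]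
    exact sum_eq_zero fun i hi => by
      rw [Nat.choose_eq_zero_of_lt (n := i) (by grind), mul_zero]
  obtain ⟨j, rfl⟩ := Nat.exists_eq_add_of_le hkn
  have below_k : ∑ i ∈ range k, (k + j).choose i * i.choose k = 0 :=
    sum_eq_zero fun i hi => by rw [Nat.choose_eq_zero_of_lt (mem_range.1 hi), mul_zero]
  calc ∑ i ∈ range (k + j + 1), (k + j).choose i * i.choose k
      = ∑ i ∈ range (j + 1), (k + j).choose (k + i) * (k + i).choose k := by
        rw [add_assoc, sum_range_add, below_k, zero_add]
    _ = ∑ i ∈ range (j + 1), (k + j).choose k * j.choose i := by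
        refine sum_congr rfl fun i _ => ?_
        rw [Nat.choose_mul (Nat.le_add_right k i)]
        simp
    _ = (k + j).choose k * 2 ^ (k + j - k) := by
        rw [← mul_sum, Nat.sum_range_choose, Nat.add_sub_cancel_left]

theorem rookBrauerModelDim_eq_sum (n : ℕ) :
    rookBrauerModelDim n = ∑ a ∈ range (n / 2 + 1),
      n.choose (2 * a) * ((2 * a).factorial / a.factorial) * 2 ^ (n - 2 * a) := by
  have extend (i : ℕ) (hi : i ∈ range (n + 1)) :
      n.choose i * brauerModelDim i = ∑ a ∈ range (n / 2 + 1),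
        n.choose i * (i.choose (2 * a) * ((2 * a).factorial / a.factorial)) := by
    rw [brauerModelDim, mul_sum]
    refine sum_subset (fun a ha => ?_) (fun a _ ha => ?_)
    · simp only [mem_range] at ha hi ⊢; omega
    · rw [Nat.choose_eq_zero_of_lt (n := i) (by simp only [mem_range] at ha; omega), zero_mul,
        mul_zero]
  rw [rookBrauerModelDim, sum_congr rfl extend, sum_comm]
  refine sum_congr rfl fun a _ => ?_
  simp_rw [← mul_assoc, ← sum_mul, Nat.sum_range_choose_mul_choose]
  ring

theorem rookBrauerModelDim_div_factorial (n : ℕ) :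
    (rookBrauerModelDim n : ℚ) / n.factorial = ∑ a ∈ range (n / 2 + 1),
      (2 : ℚ) ^ (n - 2 * a) / (a.factorial * (n - 2 * a).factorial) := by
  rw [rookBrauerModelDim_eq_sum, Nat.cast_sum, sum_div]
  refine sum_congr rfl fun a ha => ?_
  have h2a : 2 * a ≤ n := by simp only [mem_range] at ha; omega
  rw [Nat.cast_mul, Nat.cast_mul, Nat.cast_div (Nat.factorial_dvd_factorial (by omega))
    (by positivity), Nat.cast_choose ℚ h2a]
  field_simp
  push_cast
  ring

theorem PowerSeries.coeff_X_sq_add_C_mul_X_pow {R : Type*} [CommSemiring R] (c : R) {n m : ℕ}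
    (h : m ≤ n) :
    coeff n ((X ^ 2 + C c * X) ^ m) = m.choose (n - m) * c ^ (m - (n - m)) := by
  have factor : (X ^ 2 + C c * X : PowerSeries R) =
      X * ((Polynomial.X + Polynomial.C c : Polynomial R) : PowerSeries R) := by
    rw [Polynomial.coe_add, Polynomial.coe_X, Polynomial.coe_C]
    ring
  rw [factor, mul_pow, ← Polynomial.coe_pow, coeff_X_pow_mul', if_pos h, Polynomial.coeff_coe,
    Polynomial.coeff_X_add_C_pow, mul_comm]

theorem coeff_expComp_X_sq_add_C_mul_X (c : ℚ) (n : ℕ) :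
    coeff n (expComp (X ^ 2 + C c * X)) = ∑ a ∈ range (n / 2 + 1),
      c ^ (n - 2 * a) / (a.factorial * (n - 2 * a).factorial) := by
  have reflected_coeff (a : ℕ) (ha : a ≤ n) :
      coeff n ((X ^ 2 + C c * X) ^ (n - a)) / (n - a).factorial =
      (n - a).choose a * c ^ (n - 2 * a) / (n - a).factorial := by
    rw [coeff_X_sq_add_C_mul_X_pow c (Nat.sub_le n a), Nat.sub_sub_self ha, Nat.sub_sub,
      ← two_mul]
  rw [expComp, coeff_mk, ← sum_range_reflect]
  simp only [add_tsub_cancel_right]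
  rw [sum_congr rfl fun a ha => reflected_coeff a (by simp only [mem_range] at ha; omega)]
  symm
  refine sum_subset_zero_on_sdiff (fun a ha => ?_) (fun a ha => ?_) (fun a ha => ?_)
  · simp only [mem_range] at ha ⊢; omega
  · simp only [mem_sdiff, mem_range] at ha
    rw [Nat.choose_eq_zero_of_lt (by omega), Nat.cast_zero, zero_mul, zero_div]
  · have h2a : 2 * a ≤ n := by simp only [mem_range] at ha; omega
    rw [Nat.cast_choose ℚ (by omega), Nat.sub_sub, ← two_mul]
    field_simp

/-- The exponential generating function identity
`exp(X² + 2X) = Σ_{k≥0} rb_k · X^k/k!`. -/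
theorem symmetric_rook_brauer_egf :
    PowerSeries.constantCoeff
        ((PowerSeries.X : PowerSeries ℚ) ^ 2 + 2 * PowerSeries.X) = 0 ∧
    expComp ((PowerSeries.X : PowerSeries ℚ) ^ 2 + 2 * PowerSeries.X)
      = PowerSeries.mk (fun k => (rookBrauerModelDim k : ℚ) / (k.factorial : ℚ)) := by
  refine ⟨by simp, ?_⟩
  ext n
  rw [← map_ofNat C 2, coeff_expComp_X_sq_add_C_mul_X, coeff_mk, rookBrauerModelDim_div_factorial]
end

section
/- Fix k, ℓ ∈ ℕ with 2ℓ ≤ k. The number of cup diagrams on Fin k having exactly ℓ arcs equals C(k, ℓ) − C(k, ℓ−1), where by convention C(k, −1) = 0 (so in particular the count, which equals the number of vertically symmetric Temperley–Lieb diagrams on k strands of rank k − 2ℓ, is C(k,ℓ) − C(k,ℓ−1) as an integer). -/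
open Finset

/-- A cup diagram on `Fin k`: a set of arcs `(a, b)` with `a < b` that are
pairwise disjoint, noncrossing, and such that no unmatched element lies
strictly between the endpoints of an arc. -/
def IsCupDiagram {k : ℕ} (M : Finset (Fin k × Fin k)) : Prop :=
  (∀ p ∈ M, p.1 < p.2) ∧
  (∀ p ∈ M, ∀ q ∈ M, p ≠ q →
    p.1 ≠ q.1 ∧ p.1 ≠ q.2 ∧ p.2 ≠ q.1 ∧ p.2 ≠ q.2) ∧
  (∀ p ∈ M, ∀ q ∈ M, ¬(p.1 < q.1 ∧ q.1 < p.2 ∧ p.2 < q.2)) ∧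
  (∀ x : Fin k, (∀ p ∈ M, x ≠ p.1 ∧ x ≠ p.2) →
    ∀ p ∈ M, ¬(p.1 < x ∧ x < p.2))

noncomputable instance {k : ℕ} : DecidablePred (IsCupDiagram (k := k)) :=
  fun _ => Classical.dec _

/-! Deleting the last point of a cup diagram on `Fin (n + 1)` with `m + 1` arcs leaves a cup
diagram on `Fin n`, with `m + 1` arcs if the last point was unmatched and with `m` arcs if it was
matched. In the second case its partner is forced to be the largest unmatched point of the smaller
diagram, which exists as soon as `2 * m < n`. So the counts obey Pascal's rule
`c(n + 1, m + 1) = c(n, m + 1) + c(n, m)` for `2 * m < n`, like the ballot numbers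
`C(n, m) - C(n, m - 1)`; both equal `1` for `m = 0`, and both vanish at `(2 * m + 1, m + 1)`, the
ballot number by the symmetry of binomial coefficients. -/

namespace CupDiagram

variable {k n : ℕ}

def ends (M : Finset (Fin k × Fin k)) : Finset (Fin k) :=
  M.biUnion fun p => {p.1, p.2}

@[simp] lemma mem_ends {M : Finset (Fin k × Fin k)} {x : Fin k} :
    x ∈ ends M ↔ ∃ p ∈ M, x = p.1 ∨ x = p.2 := by
  simp [ends]

lemma card_ends {M : Finset (Fin k × Fin k)} (hM : IsCupDiagram M) : #(ends M) = 2 * #M := by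
  rw [ends, card_biUnion, sum_const_nat, mul_comm]
  · intro p hp
    exact card_pair (hM.1 p hp).ne
  · intro p hp q hq hpq
    have := hM.2.1 p hp q hq hpq
    simp only [disjoint_insert_left, disjoint_insert_right, disjoint_singleton, mem_insert,
      mem_singleton]
    tauto

lemma two_mul_card_le {M : Finset (Fin k × Fin k)} (hM : IsCupDiagram M) : 2 * #M ≤ k := by
  simpa [card_ends hM] using card_le_univ (ends M)

lemma nonempty_compl_ends {M : Finset (Fin k × Fin k)} (hM : IsCupDiagram M) (h : 2 * #M < k) :
    (ends M)ᶜ.Nonempty := by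
  rw [← card_pos, card_compl, card_ends hM, Fintype.card_fin]
  omega

noncomputable def cupDiagrams (k ℓ : ℕ) : Finset (Finset (Fin k × Fin k)) :=
  univ.filter fun M => IsCupDiagram M ∧ #M = ℓ

@[simp] lemma mem_cupDiagrams {ℓ : ℕ} {M : Finset (Fin k × Fin k)} :
    M ∈ cupDiagrams k ℓ ↔ IsCupDiagram M ∧ #M = ℓ := by
  simp [cupDiagrams]

lemma cupDiagrams_zero : cupDiagrams k 0 = {∅} := by
  ext M
  simp +contextual [IsCupDiagram]

lemma cupDiagrams_eq_empty {ℓ : ℕ} (h : k < 2 * ℓ) : cupDiagrams k ℓ = ∅ := by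
  refine filter_false_of_mem fun M _ ⟨hM, hcard⟩ => ?_
  have := two_mul_card_le hM
  omega

def liftArcs (n : ℕ) : Fin n × Fin n ↪ Fin (n + 1) × Fin (n + 1) :=
  Fin.castSuccEmb.prodMap Fin.castSuccEmb

@[simp] lemma liftArcs_apply (p : Fin n × Fin n) :
    liftArcs n p = (p.1.castSucc, p.2.castSucc) := rfl

lemma last_notMem_map_liftArcs (N : Finset (Fin n × Fin n)) (x : Fin (n + 1)) :
    (x, Fin.last n) ∉ N.map (liftArcs n) := by
  simp [(Fin.castSucc_lt_last _).ne]

lemma isCupDiagram_map_liftArcs_iff {N : Finset (Fin n × Fin n)} :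
    IsCupDiagram (N.map (liftArcs n)) ↔ IsCupDiagram N := by
  simp only [IsCupDiagram, forall_mem_map, liftArcs_apply, Fin.forall_fin_succ',
    Fin.castSucc_lt_castSucc_iff, ne_eq, Fin.castSucc_inj]
  simp [(Fin.castSucc_ne_last _).symm, Fin.le_last]

lemma isCupDiagram_insert_map_liftArcs_iff {N : Finset (Fin n × Fin n)} {a : Fin n} :
    IsCupDiagram (insert (a.castSucc, Fin.last n) (N.map (liftArcs n))) ↔
      IsCupDiagram N ∧ IsGreatest (((ends N)ᶜ : Finset (Fin n)) : Set (Fin n)) a := by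
  -- The new arc encloses exactly the points after `a`: they must be matched, and an arc of `N`
  -- around `a` would cross it.
  simp only [IsCupDiagram, IsGreatest, upperBounds, coe_compl, Set.mem_compl_iff, mem_coe,
    mem_ends, Set.mem_ofPred_eq, forall_mem_insert, forall_mem_map, liftArcs_apply,
    Fin.forall_fin_succ', Fin.castSucc_lt_castSucc_iff, ne_eq, Fin.castSucc_inj]
  simp [(Fin.castSucc_ne_last _).symm, Fin.le_last]
  grind

lemma insert_map_liftArcs_inj {N N' : Finset (Fin n × Fin n)} {a a' : Fin n} :
    insert (a.castSucc, Fin.last n) (N.map (liftArcs n)) =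
        insert (a'.castSucc, Fin.last n) (N'.map (liftArcs n)) ↔ a = a' ∧ N = N' := by
  refine ⟨fun h => ?_, by rintro ⟨rfl, rfl⟩; rfl⟩
  have ha : a = a' := by
    have := h ▸ mem_insert_self (a.castSucc, Fin.last n) (N.map (liftArcs n))
    simpa [last_notMem_map_liftArcs] using this
  subst ha
  refine ⟨rfl, map_injective (liftArcs n) ?_⟩
  simpa [erase_insert (last_notMem_map_liftArcs _ _)] using
    congrArg (erase · (a.castSucc, Fin.last n)) h

lemma exists_map_liftArcs_eq {M : Finset (Fin (n + 1) × Fin (n + 1))}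
    (hM : ∀ p ∈ M, p.1 < p.2) (hlast : ∀ p ∈ M, p.2 ≠ Fin.last n) :
    ∃ N : Finset (Fin n × Fin n), N.map (liftArcs n) = M := by
  have hsub : M ⊆ univ.map (liftArcs n) := fun p hp => mem_map.mpr
    ⟨(p.1.castPred ((hM p hp).trans_le (Fin.le_last _)).ne, p.2.castPred (hlast p hp)),
      mem_univ _, by simp⟩
  obtain ⟨N, -, hN⟩ := subset_map_iff.mp hsub
  exact ⟨N, hN.symm⟩

lemma exists_eq_insert_map_liftArcs {M : Finset (Fin (n + 1) × Fin (n + 1))} (hM : IsCupDiagram M)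
    {p : Fin (n + 1) × Fin (n + 1)} (hp : p ∈ M) (hlast : p.2 = Fin.last n) :
    ∃ (a : Fin n) (N : Finset (Fin n × Fin n)),
      M = insert (a.castSucc, Fin.last n) (N.map (liftArcs n)) := by
  have hp1 : p.1 ≠ Fin.last n := ((hM.1 p hp).trans_le (Fin.le_last _)).ne
  obtain ⟨N, hN⟩ := exists_map_liftArcs_eq (M := M.erase p)
    (fun q hq => hM.1 q (mem_of_mem_erase hq))
    (fun q hq => hlast ▸ (hM.2.1 q (mem_of_mem_erase hq) p hp (ne_of_mem_erase hq)).2.2.2)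
  refine ⟨p.1.castPred hp1, N, ?_⟩
  rw [hN, Fin.castSucc_castPred, ← hlast, insert_erase hp]

lemma filter_not_last_matched_eq_map (ℓ : ℕ) :
    (cupDiagrams (n + 1) ℓ).filter (fun M => ¬∃ p ∈ M, p.2 = Fin.last n) =
      (cupDiagrams n ℓ).map (mapEmbedding (liftArcs n)).toEmbedding := by
  ext M
  simp only [mem_filter, mem_cupDiagrams, mem_map, RelEmbedding.coe_toEmbedding,
    mapEmbedding_apply]
  constructor
  · rintro ⟨⟨hM, rfl⟩, hlast⟩
    push Not at hlast
    obtain ⟨N, rfl⟩ := exists_map_liftArcs_eq hM.1 hlast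
    exact ⟨N, ⟨isCupDiagram_map_liftArcs_iff.mp hM, (card_map _).symm⟩, rfl⟩
  · rintro ⟨N, ⟨hN, rfl⟩, rfl⟩
    exact ⟨⟨isCupDiagram_map_liftArcs_iff.mpr hN, card_map _⟩,
      fun ⟨p, hp, h⟩ => last_notMem_map_liftArcs N p.1 (h ▸ hp)⟩

lemma card_filter_last_matched {m : ℕ} (h : 2 * m < n) :
    #((cupDiagrams (n + 1) (m + 1)).filter (fun M => ∃ p ∈ M, p.2 = Fin.last n)) =
      #(cupDiagrams n m) := by
  have hne : ∀ N ∈ cupDiagrams n m, (ends N)ᶜ.Nonempty := fun N hN =>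
    nonempty_compl_ends (mem_cupDiagrams.mp hN).1 ((mem_cupDiagrams.mp hN).2 ▸ h)
  symm
  refine card_bij (fun N hN => insert (((ends N)ᶜ.max' (hne N hN)).castSucc, Fin.last n)
      (N.map (liftArcs n))) (fun N hN => ?_)
    (fun N _ N' _ hNN' => (insert_map_liftArcs_inj.mp hNN').2) (fun M hM => ?_)
  · obtain ⟨hN, hcard⟩ := mem_cupDiagrams.mp hN
    refine mem_filter.mpr ⟨mem_cupDiagrams.mpr ⟨?_, ?_⟩, _, mem_insert_self _ _, rfl⟩
    · exact isCupDiagram_insert_map_liftArcs_iff.mpr ⟨hN, isGreatest_max' _ _⟩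
    · rw [card_insert_of_notMem (last_notMem_map_liftArcs _ _), card_map, hcard]
  · obtain ⟨⟨hM, hcard⟩, p, hp, hlast⟩ := mem_filter.mp hM |>.imp_left mem_cupDiagrams.mp
    obtain ⟨a, N, rfl⟩ := exists_eq_insert_map_liftArcs hM hp hlast
    obtain ⟨hN, ha⟩ := isCupDiagram_insert_map_liftArcs_iff.mp hM
    rw [card_insert_of_notMem (last_notMem_map_liftArcs _ _), card_map, Nat.add_right_cancel_iff]
      at hcard
    refine ⟨N, mem_cupDiagrams.mpr ⟨hN, hcard⟩, ?_⟩
    rw [(isGreatest_max' _ _).unique ha]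

lemma card_cupDiagrams_succ_succ {m : ℕ} (h : 2 * m < n) :
    #(cupDiagrams (n + 1) (m + 1)) = #(cupDiagrams n (m + 1)) + #(cupDiagrams n m) := by
  rw [← card_filter_add_card_filter_not (fun M => ∃ p ∈ M, p.2 = Fin.last n),
    card_filter_last_matched h, filter_not_last_matched_eq_map, card_map, add_comm]

end CupDiagram

def ballotNumber (k ℓ : ℕ) : ℤ :=
  (Nat.choose k ℓ - (if ℓ = 0 then 0 else Nat.choose k (ℓ - 1)) : ℤ)

lemma ballotNumber_zero_right (k : ℕ) : ballotNumber k 0 = 1 := by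
  simp [ballotNumber]

lemma ballotNumber_succ_succ (n m : ℕ) :
    ballotNumber (n + 1) (m + 1) = ballotNumber n (m + 1) + ballotNumber n m := by
  rcases m with _ | m
  · simp [ballotNumber]
  · simp [ballotNumber, Nat.choose_succ_succ]
    ring

lemma ballotNumber_two_mul_add_one (m : ℕ) : ballotNumber (2 * m + 1) (m + 1) = 0 := by
  simp [ballotNumber, Nat.choose_symm_half]

/-- The number of cup diagrams on `Fin k` with exactly `ℓ` arcs is
`C(k, ℓ) − C(k, ℓ−1)` (with the convention `C(k, −1) = 0`). -/
theorem cup_diagram_count (k ℓ : ℕ) (h : 2 * ℓ ≤ k) :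
    ((Finset.univ.filter fun M : Finset (Fin k × Fin k) =>
        IsCupDiagram M ∧ M.card = ℓ).card : ℤ)
      = Nat.choose k ℓ - (if ℓ = 0 then 0 else Nat.choose k (ℓ - 1)) := by
  change (#(CupDiagram.cupDiagrams k ℓ) : ℤ) = ballotNumber k ℓ
  induction k generalizing ℓ with
  | zero =>
    obtain rfl : ℓ = 0 := by omega
    simp [CupDiagram.cupDiagrams_zero, ballotNumber_zero_right]
  | succ n ih =>
    obtain _ | m := ℓ
    · simp [CupDiagram.cupDiagrams_zero, ballotNumber_zero_right]
    rw [CupDiagram.card_cupDiagrams_succ_succ (by omega), Nat.cast_add, ih m (by omega),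
      ballotNumber_succ_succ]
    obtain hle | rfl : 2 * (m + 1) ≤ n ∨ n = 2 * m + 1 := by omega
    · rw [ih (m + 1) hle]
    · rw [CupDiagram.cupDiagrams_eq_empty (by omega), ballotNumber_two_mul_add_one, card_empty,
        Nat.cast_zero]
end

section
/- For every k ∈ ℕ, the total number of cup diagrams on Fin k equals the central binomial coefficient C(k, ⌊k/2⌋). (The cup diagrams on Fin k, which are in bijection with the vertically symmetric Temperley–Lieb diagrams on k strands, are in bijection with the subsets of {1, …, k} of size ⌊k/2⌋.) -/
open Finset

namespace CupProof

variable {k : ℕ}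

lemma fin3 (x : Fin 3) : x = 0 ∨ x = 1 ∨ x = 2 := by omega

variable {k : ℕ}

/-- number of positions `j < n` with symbol `v`. -/
def cnt (w : Fin k → Fin 3) (v : Fin 3) (n : ℕ) : ℕ :=
  (univ.filter fun j : Fin k => (j : ℕ) < n ∧ w j = v).card

/-- signed step of a symbol -/
def stp (x : Fin 3) : ℤ := if x = 0 then 1 else if x = 1 then -1 else 0

/-- depth after reading the first `n` symbols -/
def D (w : Fin k → Fin 3) (n : ℕ) : ℤ := (cnt w 0 n : ℤ) - cnt w 1 n

lemma cnt_zero (w : Fin k → Fin 3) (v : Fin 3) : cnt w v 0 = 0 := by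
  simp [cnt]

lemma cnt_succ (w : Fin k → Fin 3) (v : Fin 3) {n : ℕ} (h : n < k) :
    cnt w v (n + 1) = cnt w v n + if w ⟨n, h⟩ = v then 1 else 0 := by
  classical
  unfold cnt
  have hset : (univ.filter fun j : Fin k => (j : ℕ) < n + 1 ∧ w j = v)
      = (if w ⟨n, h⟩ = v then insert ⟨n, h⟩ (univ.filter fun j : Fin k => (j : ℕ) < n ∧ w j = v)
        else (univ.filter fun j : Fin k => (j : ℕ) < n ∧ w j = v)) := by
    split_ifs with hw
    · ext j
      simp only [mem_filter, mem_univ, true_and, mem_insert]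
      constructor
      · rintro ⟨hj, hjv⟩
        rcases Nat.lt_succ_iff_lt_or_eq.mp hj with h' | h'
        · exact Or.inr ⟨h', hjv⟩
        · left; exact Fin.ext h'
      · rintro (rfl | ⟨hj, hjv⟩)
        · exact ⟨Nat.lt_succ_self n, hw⟩
        · exact ⟨Nat.lt_succ_of_lt hj, hjv⟩
    · ext j
      simp only [mem_filter, mem_univ, true_and]
      constructor
      · rintro ⟨hj, hjv⟩
        rcases Nat.lt_succ_iff_lt_or_eq.mp hj with h' | h'
        · exact ⟨h', hjv⟩
        · exact absurd hjv (by rwa [show j = ⟨n, h⟩ from Fin.ext h'])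
      · rintro ⟨hj, hjv⟩
        exact ⟨Nat.lt_succ_of_lt hj, hjv⟩
  rw [hset]
  split_ifs with hw
  · rw [card_insert_of_notMem (by simp)]
  · simp

lemma cnt_stable (w : Fin k → Fin 3) (v : Fin 3) {n : ℕ} (h : k ≤ n) :
    cnt w v n = cnt w v k := by
  unfold cnt
  congr 1
  ext j
  simp only [mem_filter, mem_univ, true_and, and_congr_left_iff]
  intro _
  constructor
  · intro _; exact j.isLt
  · intro _; exact lt_of_lt_of_le j.isLt h

lemma D_zero (w : Fin k → Fin 3) : D w 0 = 0 := by simp [D, cnt_zero]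

lemma D_succ (w : Fin k → Fin 3) {n : ℕ} (h : n < k) :
    D w (n + 1) = D w n + stp (w ⟨n, h⟩) := by
  unfold D stp
  rw [cnt_succ w 0 h, cnt_succ w 1 h]
  rcases fin3 (w ⟨n, h⟩) with hx | hx | hx <;> simp [hx] <;> ring

/-- valid word with end depth `d` -/
def PWd (d : ℕ) (w : Fin k → Fin 3) : Prop :=
  (∀ i : Fin k, w i = 1 → 1 ≤ D w i) ∧
  (∀ i : Fin k, w i = 2 → D w i = 0) ∧
  D w k = (d : ℤ)

lemma D_nonneg (w : Fin k → Fin 3) (h1 : ∀ i : Fin k, w i = 1 → 1 ≤ D w i) :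
    ∀ n, 0 ≤ D w n := by
  intro n
  induction n with
  | zero => simp [D_zero]
  | succ n ih =>
    by_cases hn : n < k
    · rw [D_succ w hn]
      rcases fin3 (w ⟨n, hn⟩) with hx | hx | hx
      · simp [stp, hx]; omega
      · have := h1 ⟨n, hn⟩ hx
        simp only [stp, hx]
        norm_num
        have : (1:ℤ) ≤ D w n := this
        omega
      · simp [stp, hx]; omega
    · rw [show D w (n+1) = D w n from by
        unfold D; rw [cnt_stable w 0 (by omega), cnt_stable w 1 (by omega),
          cnt_stable w 0 (by omega : k ≤ n), cnt_stable w 1 (by omega : k ≤ n)]]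
      exact ih


/-- arc relation determined by a word -/
def RHS (w : Fin k → Fin 3) (a b : Fin k) : Prop :=
  w a = 0 ∧ w b = 1 ∧ a < b ∧ D w b = D w a + 1 ∧
    ∀ c : Fin k, a < c → c < b → w c = 1 → D w c ≠ D w a + 1

lemma stp_le (x : Fin 3) : stp x ≤ 1 := by
  rcases fin3 x with h | h | h <;> simp [stp, h]

/-- after an `L` with no matching `R` before `m`, depth stays above -/
lemma stay (w : Fin k → Fin 3)
    (h1 : ∀ i : Fin k, w i = 1 → 1 ≤ D w i)
    (h2 : ∀ i : Fin k, w i = 2 → D w i = 0)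
    (a : Fin k) (ha : w a = 0) {m : ℕ} (hm : m ≤ k)
    (hmin : ∀ c : Fin k, a < c → (c : ℕ) < m → w c = 1 → D w c ≠ D w a + 1) :
    ∀ n, (a : ℕ) < n → n ≤ m → D w a + 1 ≤ D w n := by
  intro n
  induction n with
  | zero => omega
  | succ n ih =>
    intro hn hnm
    rcases Nat.lt_or_ge (a : ℕ) n with han | han
    · -- inductive case
      have hnk : n < k := by omega
      have hDn := ih han (by omega)
      rw [D_succ w hnk]
      rcases fin3 (w ⟨n, hnk⟩) with hx | hx | hx
      · simp [stp, hx]; omega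
      · have hne := hmin ⟨n, hnk⟩ (by simpa [Fin.lt_def] using han)
          (by simp only [Fin.val_mk]; omega) hx
        have : D w n ≠ D w a + 1 := by simpa using hne
        simp [stp, hx]; omega
      · have h0 : D w n = 0 := by simpa using h2 ⟨n, hnk⟩ hx
        have hnn : 0 ≤ D w (a : ℕ) := D_nonneg w h1 _
        omega
    · -- base case : n = a
      have hna : n = (a : ℕ) := by omega
      have hnk : n < k := by rw [hna]; exact a.isLt
      rw [D_succ w hnk]
      have hfa : (⟨n, hnk⟩ : Fin k) = a := Fin.ext (by simp [hna])
      rw [hfa, ha]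
      simp [stp, hna]

lemma RHS.stay' {w : Fin k → Fin 3} {a b : Fin k}
    (h1 : ∀ i : Fin k, w i = 1 → 1 ≤ D w i)
    (h2 : ∀ i : Fin k, w i = 2 → D w i = 0)
    (h : RHS w a b) :
    ∀ n, (a : ℕ) < n → n ≤ (b : ℕ) → D w a + 1 ≤ D w n := by
  obtain ⟨ha, hb, hab, hbal, hmin⟩ := h
  exact stay w h1 h2 a ha (le_of_lt b.isLt)
    (fun c hc hcb hc1 => hmin c hc (by rwa [Fin.lt_def]) hc1)

/-- every `L` has a partner -/
lemma exists_partner_L {w : Fin k → Fin 3} (hw : PWd 0 w)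
    {a : Fin k} (ha : w a = 0) : ∃ b : Fin k, RHS w a b := by
  classical
  obtain ⟨h1, h2, h3⟩ := hw
  set s : Finset (Fin k) :=
    univ.filter (fun c => a < c ∧ w c = 1 ∧ D w c = D w a + 1) with hs
  have hne : s.Nonempty := by
    by_contra hemp
    have hmin : ∀ c : Fin k, a < c → (c : ℕ) < k → w c = 1 → D w c ≠ D w a + 1 := by
      intro c hc _ hc1 hceq
      exact hemp ⟨c, by simp [hs, hc, hc1, hceq]⟩
    have := stay w h1 h2 a ha (le_refl k) hmin k (a.isLt) (le_refl k)
    have hnn : 0 ≤ D w (a : ℕ) := D_nonneg w h1 _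
    rw [h3] at this
    omega
  refine ⟨s.min' hne, ?_⟩
  have hbmem := s.min'_mem hne
  simp only [hs, mem_filter, mem_univ, true_and] at hbmem
  obtain ⟨hab, hb1, hbD⟩ := hbmem
  refine ⟨ha, hb1, hab, hbD, ?_⟩
  intro c hac hcb hc1 hcD
  have : s.min' hne ≤ c := s.min'_le c (by simp [hs, hac, hc1, hcD])
  exact absurd hcb (not_lt.mpr this)

/-- every `R` has a partner -/
lemma exists_partner_R {w : Fin k → Fin 3} {d : ℕ} (hw : PWd d w)
    {b : Fin k} (hb : w b = 1) : ∃ a : Fin k, RHS w a b := by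
  classical
  obtain ⟨h1, h2, h3⟩ := hw
  have hDb : 1 ≤ D w b := h1 b hb
  have hk : 0 < k := lt_of_le_of_lt (Nat.zero_le _) b.isLt
  have hb0 : (0 : ℕ) < (b : ℕ) := by
    rcases Nat.eq_zero_or_pos (b : ℕ) with h | h
    · exfalso
      rw [h, D_zero] at hDb
      omega
    · exact h
  obtain ⟨a, hamem, hmax0⟩ := Finset.exists_max_image
    (univ.filter (fun j : Fin k => j < b ∧ D w j < D w b)) (fun j => (j : ℕ))
    ⟨⟨0, hk⟩, by
      simp only [mem_filter, mem_univ, true_and, Fin.lt_def, Fin.val_mk]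
      rw [D_zero]
      exact ⟨hb0, by omega⟩⟩
  simp only [mem_filter, mem_univ, true_and] at hamem
  obtain ⟨hab, haD⟩ := hamem
  have hmax : ∀ j : Fin k, (a : ℕ) < (j : ℕ) → j < b → D w b ≤ D w j := by
    intro j haj hjb
    by_contra hlt
    have : (j : ℕ) ≤ (a : ℕ) := hmax0 j (by
      simp only [mem_filter, mem_univ, true_and]
      exact ⟨hjb, by omega⟩)
    omega
  have hak : (a : ℕ) < k := a.isLt
  have hstep : D w ((a : ℕ) + 1) = D w a + stp (w a) := by
    have h := D_succ w hak
    rwa [show (⟨(a : ℕ), hak⟩ : Fin k) = a from Fin.ext rfl] at h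
  have habn : (a : ℕ) < (b : ℕ) := Fin.lt_def.mp hab
  have hD1 : D w b ≤ D w ((a : ℕ) + 1) := by
    rcases Nat.lt_or_ge ((a : ℕ) + 1) (b : ℕ) with h | h
    · have hj : ((a : ℕ) + 1) < k := by omega
      have := hmax ⟨(a : ℕ)+1, hj⟩ (by simp) (by simpa [Fin.lt_def] using h)
      simpa using this
    · have heq : ((a : ℕ) + 1) = (b : ℕ) := by omega
      rw [heq]
  have hsle : stp (w a) ≤ 1 := stp_le (w a)
  have hstp1 : stp (w a) = 1 := by omega
  have hwa : w a = 0 := by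
    rcases fin3 (w a) with h | h | h
    · exact h
    · simp [stp, h] at hstp1
    · simp [stp, h] at hstp1
  have hbal : D w b = D w a + 1 := by omega
  refine ⟨a, hwa, hb, hab, hbal, ?_⟩
  intro c hac hcb hc1 hcD
  have hck : (c : ℕ) < k := c.isLt
  have hstepc : D w ((c : ℕ) + 1) = D w c - 1 := by
    have h := D_succ w hck
    rw [show (⟨(c : ℕ), hck⟩ : Fin k) = c from Fin.ext rfl] at h
    simp only [stp, hc1] at h
    norm_num at h
    omega
  have hacn : (a : ℕ) < (c : ℕ) := Fin.lt_def.mp hac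
  have hcbn : (c : ℕ) < (b : ℕ) := Fin.lt_def.mp hcb
  rcases Nat.lt_or_ge ((c : ℕ) + 1) (b : ℕ) with h | h
  · have hj : ((c : ℕ) + 1) < k := by omega
    have hx := hmax ⟨(c : ℕ)+1, hj⟩ (by simp; omega) (by simpa [Fin.lt_def] using h)
    simp only [Fin.val_mk] at hx
    omega
  · have heq : ((c : ℕ) + 1) = (b : ℕ) := by omega
    rw [heq] at hstepc
    omega

/-- the partner of an `L` is unique -/
lemma uniq_right {w : Fin k → Fin 3} {a b b' : Fin k}
    (h : RHS w a b) (h' : RHS w a b') : b = b' := by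
  rcases lt_trichotomy b b' with hlt | heq | hlt
  · exact absurd h.2.2.2.1 (h'.2.2.2.2 b h.2.2.1 hlt h.2.1)
  · exact heq
  · exact absurd (h'.2.2.2.1) (h.2.2.2.2 b' h'.2.2.1 hlt h'.2.1)
lemma uniq_left {w : Fin k → Fin 3} {a a' b : Fin k}
    (h1 : ∀ i : Fin k, w i = 1 → 1 ≤ D w i)
    (h2 : ∀ i : Fin k, w i = 2 → D w i = 0)
    (h : RHS w a b) (h' : RHS w a' b) : a = a' := by
  by_contra hne
  wlog hlt : a < a' generalizing a a'
  · exact this h' h (Ne.symm hne) (by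
      rcases lt_trichotomy a a' with h'' | h'' | h''
      · exact absurd h'' hlt
      · exact absurd h'' hne
      · exact h'')
  have ha'b : a' < b := h'.2.2.1
  have hD := h.stay' h1 h2 (a' : ℕ) (Fin.lt_def.mp hlt) (le_of_lt (Fin.lt_def.mp ha'b))
  have hb : D w b = D w a + 1 := h.2.2.2.1
  have hb' : D w b = D w a' + 1 := h'.2.2.2.1
  omega


open Classical in
/-- the word of a diagram -/
noncomputable def wM (M : Finset (Fin k × Fin k)) : Fin k → Fin 3 := fun i =>
  if ∃ p ∈ M, p.1 = i then 0 else if ∃ p ∈ M, p.2 = i then 1 else 2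

lemma wM_eq_zero_iff {M : Finset (Fin k × Fin k)} {i : Fin k} :
    wM M i = 0 ↔ ∃ p ∈ M, p.1 = i := by
  unfold wM
  split_ifs with h h'
  · exact iff_of_true rfl h
  · exact iff_of_false (by decide) h
  · exact iff_of_false (by decide) h

lemma wM_eq_one_iff {M : Finset (Fin k × Fin k)} {i : Fin k}
    (hnLR : ¬((∃ p ∈ M, p.1 = i) ∧ (∃ p ∈ M, p.2 = i))) :
    wM M i = 1 ↔ ∃ p ∈ M, p.2 = i := by
  unfold wM
  split_ifs with h h'
  · exact iff_of_false (by decide) (fun h2 => hnLR ⟨h, h2⟩)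
  · exact iff_of_true rfl h'
  · exact iff_of_false (by decide) h'

lemma wM_eq_two_iff {M : Finset (Fin k × Fin k)} {i : Fin k} :
    wM M i = 2 ↔ (¬∃ p ∈ M, p.1 = i) ∧ (¬∃ p ∈ M, p.2 = i) := by
  unfold wM
  split_ifs with h h'
  · exact iff_of_false (by decide) (fun hh => hh.1 h)
  · exact iff_of_false (by decide) (fun hh => hh.2 h')
  · exact iff_of_true rfl ⟨h, h'⟩

open Classical in
/-- the diagram of a word -/
noncomputable def Mw (w : Fin k → Fin 3) : Finset (Fin k × Fin k) :=
  univ.filter fun p => RHS w p.1 p.2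

lemma mem_Mw {w : Fin k → Fin 3} {p : Fin k × Fin k} :
    p ∈ Mw w ↔ RHS w p.1 p.2 := by
  simp [Mw]

lemma Mw_isCup {w : Fin k → Fin 3} (hw : PWd 0 w) : IsCupDiagram (Mw w) := by
  obtain ⟨h1, h2, h3⟩ := hw
  refine ⟨?_, ?_, ?_, ?_⟩
  · intro p hp
    exact (mem_Mw.mp hp).2.2.1
  · intro p hp q hq hpq
    have hP := mem_Mw.mp hp
    have hQ := mem_Mw.mp hq
    refine ⟨?_, ?_, ?_, ?_⟩
    · intro h
      rw [h] at hP
      exact hpq (Prod.ext h (uniq_right hP hQ))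
    · intro h
      rw [h] at hP
      have h0 := hP.1
      have h1' := hQ.2.1
      rw [h0] at h1'
      exact absurd h1' (by decide)
    · intro h
      rw [← h] at hQ
      have h0 := hQ.1
      have h1' := hP.2.1
      rw [h0] at h1'
      exact absurd h1' (by decide)
    · intro h
      rw [h] at hP
      exact hpq (Prod.ext (uniq_left h1 h2 hP hQ) h)
  · rintro p hp q hq ⟨hpq1, hq1p2, hp2q2⟩
    have hP := mem_Mw.mp hp
    have hQ := mem_Mw.mp hq
    have e1 : D w p.1 + 1 ≤ D w q.1 :=
      hP.stay' h1 h2 (q.1 : ℕ) (Fin.lt_def.mp hpq1) (le_of_lt (Fin.lt_def.mp hq1p2))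
    have e2 : D w q.1 + 1 ≤ D w p.2 :=
      hQ.stay' h1 h2 (p.2 : ℕ) (Fin.lt_def.mp hq1p2) (le_of_lt (Fin.lt_def.mp hp2q2))
    have e3 : D w p.2 = D w p.1 + 1 := hP.2.2.2.1
    omega
  · rintro x hx p hp ⟨hx1, hx2⟩
    have hP := mem_Mw.mp hp
    rcases fin3 (w x) with hw0 | hw1 | hw2
    · obtain ⟨b, hb⟩ := exists_partner_L ⟨h1, h2, h3⟩ hw0
      have : (x, b) ∈ Mw w := mem_Mw.mpr hb
      exact (hx _ this).1 rfl
    · obtain ⟨a, ha⟩ := exists_partner_R ⟨h1, h2, h3⟩ hw1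
      have : (a, x) ∈ Mw w := mem_Mw.mpr ha
      exact (hx _ this).2 rfl
    · have hD0 : D w x = 0 := h2 x hw2
      have := hP.stay' h1 h2 (x : ℕ) (Fin.lt_def.mp hx1) (le_of_lt (Fin.lt_def.mp hx2))
      have hnn : 0 ≤ D w (p.1 : ℕ) := D_nonneg w h1 _
      omega

lemma wM_Mw {w : Fin k → Fin 3} (hw : PWd 0 w) : wM (Mw w) = w := by
  funext i
  have hnoLR : ¬((∃ p ∈ Mw w, p.1 = i) ∧ (∃ p ∈ Mw w, p.2 = i)) := by
    rintro ⟨⟨p, hp, hpi⟩, ⟨q, hq, hqi⟩⟩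
    have hP := mem_Mw.mp hp
    have hQ := mem_Mw.mp hq
    rw [hpi] at hP
    rw [hqi] at hQ
    have h0 := hP.1
    have h1' := hQ.2.1
    rw [h0] at h1'
    exact absurd h1' (by decide)
  rcases fin3 (w i) with h | h | h
  · rw [h]
    obtain ⟨b, hb⟩ := exists_partner_L hw h
    exact wM_eq_zero_iff.mpr ⟨(i, b), mem_Mw.mpr hb, rfl⟩
  · rw [h]
    obtain ⟨a, ha⟩ := exists_partner_R hw h
    exact (wM_eq_one_iff hnoLR).mpr ⟨(a, i), mem_Mw.mpr ha, rfl⟩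
  · rw [h]
    refine wM_eq_two_iff.mpr ⟨?_, ?_⟩
    · rintro ⟨p, hp, hpi⟩
      have hP := mem_Mw.mp hp
      rw [hpi] at hP
      exact absurd (hP.1.symm.trans h) (by decide)
    · rintro ⟨p, hp, hpi⟩
      have hP := mem_Mw.mp hp
      rw [hpi] at hP
      exact absurd (hP.2.1.symm.trans h) (by decide)


variable {M : Finset (Fin k × Fin k)}

lemma wM_one_exists {i : Fin k} (h : wM M i = 1) : ∃ p ∈ M, p.2 = i := by
  unfold wM at h
  split_ifs at h with h1 h2
  · exact absurd h (by decide)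
  · exact h2
  · exact absurd h (by decide)

/-- an `R`-point is never an `L`-point, for a cup diagram -/
lemma noLR (hM : IsCupDiagram M) {i : Fin k} :
    ¬((∃ p ∈ M, p.1 = i) ∧ (∃ p ∈ M, p.2 = i)) := by
  rintro ⟨⟨p, hp, hpi⟩, ⟨q, hq, hqi⟩⟩
  have hpq : p ≠ q := by
    intro h
    rw [h] at hpi
    rw [← hqi] at hpi
    exact absurd (hpi ▸ hM.1 q hq) (lt_irrefl _)
  exact (hM.2.1 p hp q hq hpq).2.1 (hpi.trans hqi.symm)

lemma cnt0_wM (hM : IsCupDiagram M) (n : ℕ) :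
    cnt (wM M) 0 n = (M.filter fun p => (p.1 : ℕ) < n).card := by
  unfold cnt
  symm
  refine Finset.card_bij (fun p _ => p.1) ?_ ?_ ?_
  · intro p hp
    simp only [mem_filter, mem_univ, true_and]
    simp only [mem_filter] at hp
    exact ⟨hp.2, wM_eq_zero_iff.mpr ⟨p, hp.1, rfl⟩⟩
  · intro p hp q hq h
    simp only [mem_filter] at hp hq
    by_contra hne
    exact (hM.2.1 p hp.1 q hq.1 hne).1 h
  · intro j hj
    simp only [mem_filter, mem_univ, true_and] at hj
    obtain ⟨p, hp, hpj⟩ := wM_eq_zero_iff.mp hj.2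
    exact ⟨p, by simp only [mem_filter]; exact ⟨hp, by rw [hpj]; exact hj.1⟩, hpj⟩

lemma cnt1_wM (hM : IsCupDiagram M) (n : ℕ) :
    cnt (wM M) 1 n = (M.filter fun p => (p.2 : ℕ) < n).card := by
  unfold cnt
  symm
  refine Finset.card_bij (fun p _ => p.2) ?_ ?_ ?_
  · intro p hp
    simp only [mem_filter, mem_univ, true_and]
    simp only [mem_filter] at hp
    exact ⟨hp.2, (wM_eq_one_iff (noLR hM)).mpr ⟨p, hp.1, rfl⟩⟩
  · intro p hp q hq h
    simp only [mem_filter] at hp hq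
    by_contra hne
    exact (hM.2.1 p hp.1 q hq.1 hne).2.2.2 h
  · intro j hj
    simp only [mem_filter, mem_univ, true_and] at hj
    obtain ⟨p, hp, hpj⟩ := wM_one_exists hj.2
    exact ⟨p, by simp only [mem_filter]; exact ⟨hp, by rw [hpj]; exact hj.1⟩, hpj⟩

/-- the set of arcs spanning the cut at `n` -/
noncomputable def X (M : Finset (Fin k × Fin k)) (n : ℕ) : Finset (Fin k × Fin k) :=
  M.filter fun p => (p.1 : ℕ) < n ∧ n ≤ (p.2 : ℕ)

lemma D_wM (hM : IsCupDiagram M) (n : ℕ) :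
    D (wM M) n = ((X M n).card : ℤ) := by
  unfold D
  rw [cnt0_wM hM, cnt1_wM hM]
  have hsub : (M.filter fun p => (p.2 : ℕ) < n) ⊆ (M.filter fun p => (p.1 : ℕ) < n) := by
    intro p hp
    simp only [mem_filter] at hp ⊢
    have := hM.1 p hp.1
    rw [Fin.lt_def] at this
    exact ⟨hp.1, by omega⟩
  have hdiff : (M.filter fun p => (p.1 : ℕ) < n) \ (M.filter fun p => (p.2 : ℕ) < n)
      = X M n := by
    ext p
    simp only [mem_sdiff, mem_filter, X]
    constructor
    · rintro ⟨⟨h1, h2⟩, h3⟩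
      exact ⟨h1, h2, le_of_not_gt (fun hlt => h3 ⟨h1, hlt⟩)⟩
    · rintro ⟨h1, h2, h3⟩
      exact ⟨⟨h1, h2⟩, fun hc => by omega⟩
  rw [← hdiff, card_sdiff_of_subset hsub]
  have := card_le_card hsub
  omega

lemma X_tail (hM : IsCupDiagram M) {p q : Fin k × Fin k} (hp : p ∈ M) (hq : q ∈ M)
    (h1 : (q.1 : ℕ) < (p.1 : ℕ)) (h2 : (p.1 : ℕ) ≤ (q.2 : ℕ)) :
    (p.2 : ℕ) < (q.2 : ℕ) := by
  have hqp : q ≠ p := fun h => by rw [h] at h1; omega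
  have h2' : (p.1 : ℕ) < (q.2 : ℕ) := by
    rcases eq_or_lt_of_le h2 with h | h
    · exact absurd (Fin.ext h) (hM.2.1 p hp q hq (Ne.symm hqp)).2.1
    · exact h
  rcases lt_trichotomy (q.2 : ℕ) (p.2 : ℕ) with h | h | h
  · exact absurd ⟨Fin.lt_def.mpr h1, Fin.lt_def.mpr h2', Fin.lt_def.mpr h⟩
      (hM.2.2.1 q hq p hp)
  · exact absurd (Fin.ext h.symm) (hM.2.1 p hp q hq (Ne.symm hqp)).2.2.2
  · exact h

lemma X_insert (hM : IsCupDiagram M) {p : Fin k × Fin k} (hp : p ∈ M) :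
    X M (p.2 : ℕ) = insert p (X M (p.1 : ℕ)) := by
  have hp12 : (p.1 : ℕ) < (p.2 : ℕ) := Fin.lt_def.mp (hM.1 p hp)
  ext q
  simp only [X, mem_filter, mem_insert]
  constructor
  · rintro ⟨hq, hlt, hle⟩
    by_cases hqp : q = p
    · exact Or.inl hqp
    · right
      have hle' : (p.2 : ℕ) < (q.2 : ℕ) := by
        rcases eq_or_lt_of_le hle with h | h
        · exact absurd (Fin.ext h.symm) (hM.2.1 q hq p hp hqp).2.2.2
        · exact h
      have hq1 : (q.1 : ℕ) < (p.1 : ℕ) := by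
        rcases lt_trichotomy (q.1 : ℕ) (p.1 : ℕ) with h | h | h
        · exact h
        · exact absurd (Fin.ext h).symm (hM.2.1 p hp q hq (fun hh => hqp hh.symm)).1
        · exact absurd ⟨Fin.lt_def.mpr h, Fin.lt_def.mpr hlt, Fin.lt_def.mpr hle'⟩
            (hM.2.2.1 p hp q hq)
      exact ⟨hq, hq1, by omega⟩
  · rintro (rfl | ⟨hq, h1, h2⟩)
    · exact ⟨hp, hp12, le_refl _⟩
    · have := X_tail hM hp hq h1 h2
      exact ⟨hq, by omega, by omega⟩

lemma D_arc (hM : IsCupDiagram M) {p : Fin k × Fin k} (hp : p ∈ M) :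
    D (wM M) (p.2 : ℕ) = D (wM M) (p.1 : ℕ) + 1 := by
  rw [D_wM hM, D_wM hM, X_insert hM hp,
    card_insert_of_notMem (by simp [X])]
  push_cast
  ring

lemma D_mid (hM : IsCupDiagram M) {p q : Fin k × Fin k} (hp : p ∈ M) (hq : q ∈ M)
    {c : Fin k} (hqc : q.2 = c) (hac : p.1 < c) (hcb : c < p.2) :
    D (wM M) (p.1 : ℕ) + 2 ≤ D (wM M) (c : ℕ) := by
  have hacn : (p.1 : ℕ) < (c : ℕ) := Fin.lt_def.mp hac
  have hcbn : (c : ℕ) < (p.2 : ℕ) := Fin.lt_def.mp hcb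
  have hq12 : (q.1 : ℕ) < (q.2 : ℕ) := Fin.lt_def.mp (hM.1 q hq)
  have hqcn : (q.2 : ℕ) = (c : ℕ) := by rw [hqc]
  have hqp : q ≠ p := by
    intro h
    rw [h] at hqcn
    omega
  have hsub : insert q (insert p (X M (p.1 : ℕ))) ⊆ X M (c : ℕ) := by
    intro r hr
    simp only [mem_insert] at hr
    rcases hr with rfl | rfl | hr
    · simp only [X, mem_filter]
      exact ⟨hq, by omega, by omega⟩
    · simp only [X, mem_filter]
      exact ⟨hp, by omega, by omega⟩
    · simp only [X, mem_filter] at hr ⊢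
      have := X_tail hM hp hr.1 hr.2.1 hr.2.2
      exact ⟨hr.1, by omega, by omega⟩
  have hqnotin : q ∉ insert p (X M (p.1 : ℕ)) := by
    intro hmem
    rcases mem_insert.mp hmem with h | h
    · exact hqp h
    · simp only [X, mem_filter] at h
      have := X_tail hM hp hq h.2.1 h.2.2
      omega
  have hpnotin : p ∉ X M (p.1 : ℕ) := by simp [X]
  have hcard : (X M (p.1 : ℕ)).card + 2 ≤ (X M (c : ℕ)).card := by
    calc (X M (p.1 : ℕ)).card + 2
        = (insert q (insert p (X M (p.1 : ℕ)))).card := by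
          rw [card_insert_of_notMem hqnotin, card_insert_of_notMem hpnotin]
      _ ≤ (X M (c : ℕ)).card := card_le_card hsub
  rw [D_wM hM, D_wM hM]
  omega

lemma RHS_of_mem (hM : IsCupDiagram M) {p : Fin k × Fin k} (hp : p ∈ M) :
    RHS (wM M) p.1 p.2 := by
  refine ⟨wM_eq_zero_iff.mpr ⟨p, hp, rfl⟩,
    (wM_eq_one_iff (noLR hM)).mpr ⟨p, hp, rfl⟩, hM.1 p hp, D_arc hM hp, ?_⟩
  intro c hac hcb hc1 hcD
  obtain ⟨q, hq, hqc⟩ := wM_one_exists hc1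
  have := D_mid hM hp hq hqc hac hcb
  omega

lemma Mw_wM (hM : IsCupDiagram M) : Mw (wM M) = M := by
  ext p
  rw [mem_Mw]
  constructor
  · intro h
    obtain ⟨q, hq, hq1⟩ := wM_eq_zero_iff.mp h.1
    have hQ := RHS_of_mem hM hq
    rw [hq1] at hQ
    have := uniq_right h hQ
    have hpq : p = q := Prod.ext hq1.symm this
    rwa [hpq]
  · intro h
    exact RHS_of_mem hM h

lemma PWd_wM (hM : IsCupDiagram M) : PWd 0 (wM M) := by
  refine ⟨?_, ?_, ?_⟩
  · intro i hi
    obtain ⟨q, hq, hqi⟩ := wM_one_exists hi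
    rw [D_wM hM]
    have hq12 : (q.1 : ℕ) < (q.2 : ℕ) := Fin.lt_def.mp (hM.1 q hq)
    have : q ∈ X M (i : ℕ) := by
      simp only [X, mem_filter]
      have : (q.2 : ℕ) = (i : ℕ) := by rw [hqi]
      exact ⟨hq, by omega, by omega⟩
    have := card_pos.mpr ⟨q, this⟩
    omega
  · intro i hi
    rw [D_wM hM]
    have hemp : X M (i : ℕ) = ∅ := by
      rw [eq_empty_iff_forall_notMem]
      intro q hqX
      simp only [X, mem_filter] at hqX
      obtain ⟨hq, hq1, hq2⟩ := hqX
      obtain ⟨hni1, hni2⟩ := wM_eq_two_iff.mp hi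
      have hfree : ∀ r ∈ M, i ≠ r.1 ∧ i ≠ r.2 := by
        intro r hr
        constructor
        · intro h; exact hni1 ⟨r, hr, h.symm⟩
        · intro h; exact hni2 ⟨r, hr, h.symm⟩
      have hq2' : (i : ℕ) < (q.2 : ℕ) := by
        rcases eq_or_lt_of_le hq2 with h | h
        · exact absurd (Fin.ext h) (hfree q hq).2
        · exact h
      exact hM.2.2.2 i hfree q hq ⟨Fin.lt_def.mpr hq1, Fin.lt_def.mpr hq2'⟩
    rw [hemp]
    simp
  · rw [D_wM hM]
    have hemp : X M k = ∅ := by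
      rw [eq_empty_iff_forall_notMem]
      intro q hqX
      simp only [X, mem_filter] at hqX
      exact absurd hqX.2.2 (by push_neg; exact q.2.isLt)
    rw [hemp]
    simp


lemma stp0 : stp (0 : Fin 3) = 1 := rfl
lemma stp1 : stp (1 : Fin 3) = -1 := rfl
lemma stp2 : stp (2 : Fin 3) = 0 := rfl

lemma cnt_snoc (w' : Fin k → Fin 3) (x : Fin 3) (v : Fin 3) {n : ℕ} (h : n ≤ k) :
    cnt (Fin.snoc w' x) v n = cnt w' v n := by
  unfold cnt
  symm
  refine Finset.card_bij (fun j _ => Fin.castSucc j) ?_ ?_ ?_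
  · intro j hj
    simp only [mem_filter, mem_univ, true_and] at hj ⊢
    rw [Fin.snoc_castSucc]
    exact ⟨by simpa using hj.1, hj.2⟩
  · intro j₁ h₁ j₂ h₂ hh
    exact Fin.castSucc_injective k hh
  · intro j hj
    simp only [mem_filter, mem_univ, true_and] at hj
    have hjk : (j : ℕ) < k := lt_of_lt_of_le hj.1 h
    refine ⟨⟨(j : ℕ), hjk⟩, ?_, ?_⟩
    · simp only [mem_filter, mem_univ, true_and]
      constructor
      · simpa using hj.1
      · have : Fin.castSucc (⟨(j : ℕ), hjk⟩ : Fin k) = j := by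
          apply Fin.ext; simp
        rw [← this, Fin.snoc_castSucc] at hj
        exact hj.2
    · apply Fin.ext; simp

lemma D_snoc (w' : Fin k → Fin 3) (x : Fin 3) {n : ℕ} (h : n ≤ k) :
    D (Fin.snoc w' x : Fin (k+1) → Fin 3) n = D w' n := by
  unfold D
  rw [cnt_snoc w' x 0 h, cnt_snoc w' x 1 h]

lemma D_snoc_top (w' : Fin k → Fin 3) (x : Fin 3) :
    D (Fin.snoc w' x : Fin (k+1) → Fin 3) (k+1) = D w' k + stp x := by
  rw [D_succ _ (Nat.lt_succ_self k)]
  rw [D_snoc w' x (le_refl k)]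
  congr 1
  rw [show (⟨k, Nat.lt_succ_self k⟩ : Fin (k+1)) = Fin.last k from rfl, Fin.snoc_last]

lemma PWd_snoc_iff (w' : Fin k → Fin 3) (x : Fin 3) (d : ℕ) :
    PWd d (Fin.snoc w' x : Fin (k+1) → Fin 3) ↔
      (∀ i : Fin k, w' i = 1 → 1 ≤ D w' i) ∧
      (∀ i : Fin k, w' i = 2 → D w' i = 0) ∧
      (x = 1 → 1 ≤ D w' k) ∧ (x = 2 → D w' k = 0) ∧
      D w' k + stp x = (d : ℤ) := by
  constructor
  · rintro ⟨H1, H2, H3⟩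
    refine ⟨?_, ?_, ?_, ?_, ?_⟩
    · intro i hi
      have := H1 (Fin.castSucc i) (by rwa [Fin.snoc_castSucc])
      rwa [show ((Fin.castSucc i : Fin (k+1)) : ℕ) = (i : ℕ) from rfl,
        D_snoc w' x (le_of_lt i.isLt)] at this
    · intro i hi
      have := H2 (Fin.castSucc i) (by rwa [Fin.snoc_castSucc])
      rwa [show ((Fin.castSucc i : Fin (k+1)) : ℕ) = (i : ℕ) from rfl,
        D_snoc w' x (le_of_lt i.isLt)] at this
    · intro hx
      have := H1 (Fin.last k) (by rwa [Fin.snoc_last])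
      rwa [show ((Fin.last k : Fin (k+1)) : ℕ) = k from rfl,
        D_snoc w' x (le_refl k)] at this
    · intro hx
      have := H2 (Fin.last k) (by rwa [Fin.snoc_last])
      rwa [show ((Fin.last k : Fin (k+1)) : ℕ) = k from rfl,
        D_snoc w' x (le_refl k)] at this
    · rw [← D_snoc_top w' x]
      exact H3
  · rintro ⟨H1, H2, Hx1, Hx2, Htop⟩
    refine ⟨?_, ?_, ?_⟩
    · intro i hi
      induction i using Fin.lastCases with
      | last =>
        rw [Fin.snoc_last] at hi
        rw [show ((Fin.last k : Fin (k+1)) : ℕ) = k from rfl, D_snoc w' x (le_refl k)]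
        exact Hx1 hi
      | cast j =>
        rw [Fin.snoc_castSucc] at hi
        rw [show ((Fin.castSucc j : Fin (k+1)) : ℕ) = (j : ℕ) from rfl,
          D_snoc w' x (le_of_lt j.isLt)]
        exact H1 j hi
    · intro i hi
      induction i using Fin.lastCases with
      | last =>
        rw [Fin.snoc_last] at hi
        rw [show ((Fin.last k : Fin (k+1)) : ℕ) = k from rfl, D_snoc w' x (le_refl k)]
        exact Hx2 hi
      | cast j =>
        rw [Fin.snoc_castSucc] at hi
        rw [show ((Fin.castSucc j : Fin (k+1)) : ℕ) = (j : ℕ) from rfl,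
          D_snoc w' x (le_of_lt j.isLt)]
        exact H2 j hi
    · rw [D_snoc_top w' x]
      exact Htop

open Classical in
noncomputable def Nw (k d : ℕ) : ℕ :=
  ((univ : Finset (Fin k → Fin 3)).filter fun w => PWd d w).card

lemma Nw_zero (d : ℕ) : Nw 0 d = if d = 0 then 1 else 0 := by
  classical
  unfold Nw
  split_ifs with hd
  · subst hd
    rw [filter_true_of_mem]
    · simp
    · intro w _
      exact ⟨fun i => i.elim0, fun i => i.elim0, by rw [show ((0:ℕ):ℤ) = 0 from rfl]; exact D_zero w⟩
  · rw [filter_false_of_mem]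
    · simp
    · intro w _ hw
      have := hw.2.2
      rw [D_zero] at this
      exact hd (by exact_mod_cast this.symm)

open Classical in
lemma Nw_fiber (d : ℕ) (x : Fin 3) :
    (((univ : Finset (Fin (k+1) → Fin 3)).filter fun w => PWd d w).filter
        fun w => w (Fin.last k) = x).card
      = ((univ : Finset (Fin k → Fin 3)).filter
          fun w' => PWd d (Fin.snoc w' x : Fin (k+1) → Fin 3)).card := by
  refine Finset.card_bij' (fun w _ => w ∘ Fin.castSucc) (fun w' _ => Fin.snoc w' x)
    ?_ ?_ ?_ ?_
  · intro w hw
    simp only [mem_filter, mem_univ, true_and] at hw ⊢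
    have hsnoc : (Fin.snoc (w ∘ Fin.castSucc) x : Fin (k+1) → Fin 3) = w := by
      funext j
      induction j using Fin.lastCases with
      | last => rw [Fin.snoc_last, hw.2]
      | cast j => rw [Fin.snoc_castSucc]; rfl
    rw [hsnoc]
    exact hw.1
  · intro w' hw'
    simp only [mem_filter, mem_univ, true_and] at hw' ⊢
    exact ⟨hw', by simp⟩
  · intro w hw
    simp only [mem_filter, mem_univ, true_and] at hw
    show (Fin.snoc (w ∘ Fin.castSucc) x : Fin (k+1) → Fin 3) = w
    funext j
    induction j using Fin.lastCases with
    | last => rw [Fin.snoc_last, hw.2]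
    | cast j => rw [Fin.snoc_castSucc]; rfl
  · intro w' hw'
    show (Fin.snoc w' x : Fin (k+1) → Fin 3) ∘ Fin.castSucc = w'
    funext j
    simp only [Function.comp_apply, Fin.snoc_castSucc]

open Classical in
lemma Nw_succ (d : ℕ) :
    Nw (k+1) d = ∑ x : Fin 3, ((univ : Finset (Fin k → Fin 3)).filter
      fun w' => PWd d (Fin.snoc w' x : Fin (k+1) → Fin 3)).card := by
  unfold Nw
  rw [Finset.card_eq_sum_card_fiberwise
    (f := fun w : Fin (k+1) → Fin 3 => w (Fin.last k)) (t := univ) (fun _ _ => mem_univ _)]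
  exact Finset.sum_congr rfl fun x _ => Nw_fiber d x

open Classical in
lemma piece_L (d : ℕ) :
    ((univ : Finset (Fin k → Fin 3)).filter
      fun w' => PWd d (Fin.snoc w' (0 : Fin 3) : Fin (k+1) → Fin 3)).card
    = if 1 ≤ d then Nw k (d - 1) else 0 := by
  split_ifs with hd
  · unfold Nw
    congr 1
    apply filter_congr
    intro w _
    rw [PWd_snoc_iff, stp0]
    unfold PWd
    constructor
    · rintro ⟨h1, h2, _, _, h5⟩
      exact ⟨h1, h2, by omega⟩
    · rintro ⟨h1, h2, h3⟩
      exact ⟨h1, h2, fun h => absurd h (by decide), fun h => absurd h (by decide), by omega⟩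
  · have hd0 : d = 0 := by omega
    subst hd0
    rw [filter_false_of_mem]
    · simp
    · intro w _ hw
      rw [PWd_snoc_iff, stp0] at hw
      obtain ⟨h1, _, _, _, h5⟩ := hw
      have := D_nonneg w h1 k
      omega

open Classical in
lemma piece_R (d : ℕ) :
    ((univ : Finset (Fin k → Fin 3)).filter
      fun w' => PWd d (Fin.snoc w' (1 : Fin 3) : Fin (k+1) → Fin 3)).card
    = Nw k (d + 1) := by
  unfold Nw
  congr 1
  apply filter_congr
  intro w _
  rw [PWd_snoc_iff, stp1]
  unfold PWd
  constructor
  · rintro ⟨h1, h2, _, _, h5⟩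
    exact ⟨h1, h2, by omega⟩
  · rintro ⟨h1, h2, h3⟩
    exact ⟨h1, h2, fun _ => by omega, fun h => absurd h (by decide), by omega⟩

open Classical in
lemma piece_U (d : ℕ) :
    ((univ : Finset (Fin k → Fin 3)).filter
      fun w' => PWd d (Fin.snoc w' (2 : Fin 3) : Fin (k+1) → Fin 3)).card
    = if d = 0 then Nw k 0 else 0 := by
  split_ifs with hd
  · subst hd
    unfold Nw
    congr 1
    apply filter_congr
    intro w _
    rw [PWd_snoc_iff, stp2]
    unfold PWd
    constructor
    · rintro ⟨h1, h2, _, h4, h5⟩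
      have := h4 rfl
      exact ⟨h1, h2, by omega⟩
    · rintro ⟨h1, h2, h3⟩
      exact ⟨h1, h2, fun h => absurd h (by decide), fun _ => by omega, by omega⟩
  · rw [filter_false_of_mem]
    · simp
    · intro w _ hw
      rw [PWd_snoc_iff, stp2] at hw
      obtain ⟨_, _, _, h4, h5⟩ := hw
      have h40 := h4 rfl
      omega

lemma Nw_rec_zero : Nw (k+1) 0 = Nw k 1 + Nw k 0 := by
  rw [Nw_succ, Fin.sum_univ_three, piece_L, piece_R, piece_U]
  simp

lemma Nw_rec_succ (d : ℕ) : Nw (k+1) (d+1) = Nw k d + Nw k (d+2) := by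
  rw [Nw_succ, Fin.sum_univ_three, piece_L, piece_R, piece_U]
  simp only [Nat.le_add_left, if_true, Nat.add_sub_cancel, Nat.succ_ne_zero, if_false]
  have : d + 1 + 1 = d + 2 := rfl
  rw [this]
  omega


lemma choose_id0 {k : ℕ} (hk : 1 ≤ k) :
    Nat.choose (k+1) ((k+1)/2) = Nat.choose k ((k-1)/2) + Nat.choose k (k/2) := by
  rcases Nat.even_or_odd k with ⟨m, hm⟩ | ⟨m, hm⟩
  · -- k = 2m, m ≥ 1
    have hm1 : 1 ≤ m := by omega
    obtain ⟨t, ht⟩ : ∃ t, m = t + 1 := ⟨m - 1, by omega⟩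
    have h1 : (k+1)/2 = t + 1 := by omega
    have h2 : (k-1)/2 = t := by omega
    have h3 : k/2 = t + 1 := by omega
    rw [h1, h2, h3, Nat.choose_succ_succ]
  · -- k = 2m+1
    have h1 : (k+1)/2 = m + 1 := by omega
    have h2 : (k-1)/2 = m := by omega
    have h3 : k/2 = m := by omega
    rw [h1, h2, h3, Nat.choose_succ_succ]
    simp only [Nat.succ_eq_add_one]
    have hsym : Nat.choose k (m+1) = Nat.choose k m := by
      have := Nat.choose_symm (show m ≤ k by omega)
      rwa [show k - m = m + 1 by omega] at this
    omega

lemma Nw_closed : ∀ k d : ℕ, Nw k d = if d ≤ k then Nat.choose k ((k - d)/2) else 0 := by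
  intro k
  induction k with
  | zero =>
    intro d
    rw [Nw_zero]
    rcases Nat.eq_zero_or_pos d with h | h
    · subst h; simp
    · rw [if_neg (by omega), if_neg (by omega)]
  | succ k ih =>
    intro d
    match d with
    | 0 =>
      rw [Nw_rec_zero, ih 1, ih 0, if_pos (Nat.zero_le _)]
      rcases Nat.eq_zero_or_pos k with hk | hk
      · subst hk; simp
      · rw [if_pos (by omega), if_pos (by omega), Nat.sub_zero]
        exact (choose_id0 hk).symm
    | e + 1 =>
      rw [Nw_rec_succ, ih e, ih (e+2)]
      rcases Nat.lt_or_ge k e with h | h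
      · rw [if_neg (by omega), if_neg (by omega), if_neg (by omega)]
      rcases Nat.eq_or_lt_of_le h with h2 | h2
      · -- e = k
        subst h2
        rw [if_pos le_rfl, if_neg (by omega), if_pos (by omega)]
        simp
      rcases Nat.eq_or_lt_of_le h2 with h3 | h3
      · -- e + 1 = k
        rw [if_pos (by omega), if_neg (by omega), if_pos (by omega)]
        rw [show k - e = 1 by omega, show k + 1 - (e+1) = 1 by omega]
        norm_num
      · -- e + 2 ≤ k
        rw [if_pos (by omega), if_pos (by omega), if_pos (by omega)]
        have ht : 2 ≤ k - e := by omega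
        obtain ⟨s, hs⟩ : ∃ s, (k - e)/2 = s + 1 := ⟨(k-e)/2 - 1, by omega⟩
        have h4 : (k - (e+2))/2 = s := by omega
        have h5 : (k + 1 - (e+1))/2 = s + 1 := by omega
        rw [h4, h5, hs, Nat.choose_succ_succ]
        simp only [Nat.succ_eq_add_one]
        omega


end CupProof

/-- The total number of cup diagrams on `Fin k` equals the central binomial
coefficient `C(k, ⌊k/2⌋)`. -/
theorem cup_diagram_total_count (k : ℕ) :
    (Finset.univ.filter fun M : Finset (Fin k × Fin k) =>
        IsCupDiagram M).card
      = Nat.choose k (k / 2) := by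
  classical
  have hbij : (Finset.univ.filter fun M : Finset (Fin k × Fin k) =>
      IsCupDiagram M).card = CupProof.Nw k 0 := by
    unfold CupProof.Nw
    refine Finset.card_bij' (fun M _ => CupProof.wM M) (fun w _ => CupProof.Mw w)
      ?_ ?_ ?_ ?_
    · intro M hM
      simp only [Finset.mem_filter, Finset.mem_univ, true_and] at hM ⊢
      exact CupProof.PWd_wM hM
    · intro w hw
      simp only [Finset.mem_filter, Finset.mem_univ, true_and] at hw ⊢
      exact CupProof.Mw_isCup hw
    · intro M hM
      simp only [Finset.mem_filter, Finset.mem_univ, true_and] at hM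
      exact CupProof.Mw_wM hM
    · intro w hw
      simp only [Finset.mem_filter, Finset.mem_univ, true_and] at hw
      exact CupProof.wM_Mw hw
  rw [hbij, CupProof.Nw_closed k 0, if_pos (Nat.zero_le k), Nat.sub_zero]
end

section
/- Fix k, r ∈ ℕ with r ≤ k. The number of pairs (D, M), where D is a subset of Fin k and M is a cup diagram on D (with respect to the order induced from Fin k) leaving exactly r elements of D unmatched, equals Σ_{c=0}^{⌊(k−r)/2⌋} C(k, r+2c)·(C(r+2c, c) − C(r+2c, c−1)), with the convention C(n, −1) = 0. (Such pairs are in bijection with the vertically symmetric Motzkin diagrams on k vertices of rank r.) -/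
open Finset
open scoped Classical

/-- A cup diagram on a subset `D` of `Fin k` (with the induced order): a set of
arcs `(a, b)` with endpoints in `D`, `a < b`, that are pairwise disjoint,
noncrossing, and such that no unmatched element of `D` lies strictly between
the endpoints of an arc. -/
def IsCupDiagramOn {k : ℕ} (D : Finset (Fin k)) (M : Finset (Fin k × Fin k)) :
    Prop :=
  (∀ p ∈ M, p.1 ∈ D ∧ p.2 ∈ D) ∧
  (∀ p ∈ M, p.1 < p.2) ∧
  (∀ p ∈ M, ∀ q ∈ M, p ≠ q →
    p.1 ≠ q.1 ∧ p.1 ≠ q.2 ∧ p.2 ≠ q.1 ∧ p.2 ≠ q.2) ∧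
  (∀ p ∈ M, ∀ q ∈ M, ¬(p.1 < q.1 ∧ q.1 < p.2 ∧ p.2 < q.2)) ∧
  (∀ x ∈ D, (∀ p ∈ M, x ≠ p.1 ∧ x ≠ p.2) →
    ∀ p ∈ M, ¬(p.1 < x ∧ x < p.2))

/-!
Encode a pair `(D, M)` by the word recording, for every point of `Fin k`, whether it lies outside
`D`, is unmatched, or is the left or right end of an arc. Reading left ends as opening and right
ends as closing brackets, the height of the word before position `t` is the number of arcs passing
over `t`. Hence the words that occur are exactly the ballot words (height never negative, zero at
unmatched points and at the end), and `M` is recovered by bracket matching. Ballot words with `r`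
unmatched, `a` opening and `b` closing letters satisfy a Pascal-type recursion in the length, solved
by `C(k, r+a+b) · (C(r+a+b, b) - C(r+a+b, b-1))`; summing over `a = b = c` gives the formula.
-/

namespace IsCupDiagramOn

variable {k : ℕ} {D : Finset (Fin k)} {M : Finset (Fin k × Fin k)} {p q : Fin k × Fin k}

theorem fst_mem (H : IsCupDiagramOn D M) (hp : p ∈ M) : p.1 ∈ D := (H.1 p hp).1

theorem snd_mem (H : IsCupDiagramOn D M) (hp : p ∈ M) : p.2 ∈ D := (H.1 p hp).2

theorem fst_lt_snd (H : IsCupDiagramOn D M) (hp : p ∈ M) : p.1 < p.2 := H.2.1 p hp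

theorem eq_of_fst_eq (H : IsCupDiagramOn D M) (hp : p ∈ M) (hq : q ∈ M) (h : p.1 = q.1) :
    p = q := by
  by_contra hpq
  exact (H.2.2.1 p hp q hq hpq).1 h

theorem eq_of_snd_eq (H : IsCupDiagramOn D M) (hp : p ∈ M) (hq : q ∈ M) (h : p.2 = q.2) :
    p = q := by
  by_contra hpq
  exact (H.2.2.1 p hp q hq hpq).2.2.2 h

theorem fst_ne_snd (H : IsCupDiagramOn D M) (hp : p ∈ M) (hq : q ∈ M) : p.1 ≠ q.2 := by
  intro h
  by_cases hpq : p = q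
  · subst hpq
    exact (H.fst_lt_snd hp).ne h
  · exact (H.2.2.1 p hp q hq hpq).2.1 h

theorem snd_lt_snd_of_fst_lt_of_lt_snd (H : IsCupDiagramOn D M) (hp : p ∈ M) (hq : q ∈ M) (h₁ : p.1 < q.1)
    (h₂ : q.1 < p.2) : q.2 < p.2 := by
  rcases lt_trichotomy q.2 p.2 with h | h | h
  · exact h
  · obtain rfl := H.eq_of_snd_eq hq hp h
    exact absurd h₁ (lt_irrefl _)
  · exact absurd ⟨h₁, h₂, h⟩ (H.2.2.2.1 p hp q hq)

theorem not_between_of_unmatched (H : IsCupDiagramOn D M) {x : Fin k} (hx : x ∈ D)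
    (hfree : ∀ p ∈ M, x ≠ p.1 ∧ x ≠ p.2) (hp : p ∈ M) : ¬(p.1 < x ∧ x < p.2) :=
  H.2.2.2.2 x hx hfree p hp

end IsCupDiagramOn

namespace CupDiagram

inductive Letter
  | outside | free | opening | closing
  deriving DecidableEq

instance : Fintype Letter :=
  ⟨{.outside, .free, .opening, .closing}, fun x => by cases x <;> simp⟩

theorem Letter.sum_univ {M : Type*} [AddCommMonoid M] (f : Letter → M) :
    ∑ x, f x = f .outside + f .free + f .opening + f .closing := by
  simp [Finset.univ, Fintype.elems, add_assoc]

def Letter.step : Letter → ℤ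
  | .opening => 1
  | .closing => -1
  | _ => 0

theorem Letter.neg_one_le_step (x : Letter) : -1 ≤ x.step := by
  cases x <;> simp [Letter.step]

variable {k : ℕ}

def letterCount (c : Letter) (w : Fin k → Letter) (i : ℕ) : ℕ :=
  #{j : Fin k | (j : ℕ) < i ∧ w j = c}

def height (w : Fin k → Letter) (i : ℕ) : ℤ :=
  letterCount .opening w i - letterCount .closing w i

theorem letterCount_zero (c : Letter) (w : Fin k → Letter) : letterCount c w 0 = 0 := by
  simp [letterCount]

theorem letterCount_of_le (c : Letter) (w : Fin k → Letter) {i : ℕ} (hi : k ≤ i) :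
    letterCount c w i = #{j | w j = c} := by
  simp only [letterCount]
  congr 1
  exact filter_congr fun j _ => by simp [j.isLt.trans_le hi]

theorem letterCount_succ (c : Letter) (w : Fin k → Letter) {i : ℕ} (hi : i < k) :
    letterCount c w (i + 1) = letterCount c w i + if w ⟨i, hi⟩ = c then 1 else 0 := by
  have hsplit : ∀ j : Fin k, (if (j : ℕ) < i + 1 ∧ w j = c then 1 else 0) =
      (if (j : ℕ) < i ∧ w j = c then 1 else 0) +
        if ⟨i, hi⟩ = j then (if w j = c then 1 else 0) else 0 := fun j => by
    rcases lt_trichotomy (j : ℕ) i with h | h | h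
    · simp [h, h.trans (Nat.lt_succ_self i), Fin.ext_iff, h.ne']
    · simp [h, Fin.ext_iff]
    · simp [h.not_gt, show ¬ (j : ℕ) < i + 1 by omega, Fin.ext_iff, h.ne]
  simp only [letterCount, card_filter, hsplit, sum_add_distrib, sum_ite_eq, mem_univ, if_true]

theorem height_zero (w : Fin k → Letter) : height w 0 = 0 := by
  simp [height, letterCount_zero]

theorem height_succ (w : Fin k → Letter) {i : ℕ} (hi : i < k) :
    height w (i + 1) = height w i + (w ⟨i, hi⟩).step := by
  simp only [height, letterCount_succ _ w hi]
  cases w ⟨i, hi⟩ <;> simp only [Letter.step, reduceCtorEq, ↓reduceIte, Nat.cast_add,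
    Nat.cast_one, add_zero] <;> ring

theorem letterCount_snoc_of_le (c : Letter) (w : Fin k → Letter) (x : Letter) {i : ℕ}
    (hi : i ≤ k) : letterCount c (Fin.snoc w x : Fin (k + 1) → Letter) i = letterCount c w i := by
  simp only [letterCount, card_filter, Fin.sum_univ_castSucc, Fin.val_castSucc, Fin.snoc_castSucc,
    Fin.val_last, hi.not_gt, false_and, if_false, add_zero]

theorem letterCount_snoc_last (c : Letter) (w : Fin k → Letter) (x : Letter) :
    letterCount c (Fin.snoc w x : Fin (k + 1) → Letter) (k + 1) =
      letterCount c w k + if x = c then 1 else 0 := by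
  rw [letterCount_succ _ _ k.lt_succ_self, letterCount_snoc_of_le _ _ _ le_rfl]
  simp [show (⟨k, k.lt_succ_self⟩ : Fin (k + 1)) = Fin.last k from rfl]

theorem height_snoc_of_le (w : Fin k → Letter) (x : Letter) {i : ℕ} (hi : i ≤ k) :
    height (Fin.snoc w x : Fin (k + 1) → Letter) i = height w i := by
  simp [height, letterCount_snoc_of_le _ _ _ hi]

theorem height_snoc_last (w : Fin k → Letter) (x : Letter) :
    height (Fin.snoc w x : Fin (k + 1) → Letter) (k + 1) = height w k + x.step := by
  rw [height_succ _ k.lt_succ_self, height_snoc_of_le _ _ le_rfl]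
  simp [show (⟨k, k.lt_succ_self⟩ : Fin (k + 1)) = Fin.last k from rfl]

def IsBallotWord (w : Fin k → Letter) : Prop :=
  (∀ i ≤ k, 0 ≤ height w i) ∧ ∀ j : Fin k, w j = .free → height w j = 0

theorem isBallotWord_snoc {w : Fin k → Letter} {x : Letter} :
    IsBallotWord (Fin.snoc w x : Fin (k + 1) → Letter) ↔
      IsBallotWord w ∧ (x = .closing → 0 < height w k) ∧ (x = .free → height w k = 0) := by
  have hlast := height_snoc_last w x
  constructor
  · rintro ⟨hnonneg, hfree⟩
    refine ⟨⟨fun i hi => ?_, fun j hj => ?_⟩, fun hx => ?_, fun hx => ?_⟩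
    · simpa [height_snoc_of_le w x hi] using hnonneg i (by omega)
    · simpa [height_snoc_of_le w x j.isLt.le] using hfree j.castSucc (by simpa using hj)
    · have := hnonneg (k + 1) le_rfl
      rw [hlast, hx] at this
      simp only [Letter.step] at this
      omega
    · simpa [height_snoc_of_le w x le_rfl] using hfree (Fin.last k) (by simpa using hx)
  · rintro ⟨⟨hnonneg, hfree⟩, hclosing, hx⟩
    refine ⟨fun i hi => ?_, fun j hj => ?_⟩
    · rcases hi.lt_or_eq with hi | rfl
      · rw [height_snoc_of_le w x (by omega)]
        exact hnonneg i (by omega)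
      · have := hnonneg k le_rfl
        rw [hlast]
        cases x <;> simp only [Letter.step] <;> first | omega | linarith [hclosing rfl]
    · induction j using Fin.lastCases with
      | last => simpa [height_snoc_of_le w x le_rfl] using hx (by simpa using hj)
      | cast j =>
        simpa [height_snoc_of_le w x j.isLt.le] using hfree j (by simpa using hj)

noncomputable def ballotWords (k r a b : ℕ) : Finset (Fin k → Letter) :=
  {w | IsBallotWord w ∧ letterCount .free w k = r ∧ letterCount .opening w k = a ∧
    letterCount .closing w k = b}

theorem card_filter_snoc {α : Type*} [Fintype α] (P : (Fin (k + 1) → α) → Prop)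
    [DecidablePred P] :
    #{w | P w} = ∑ x, #{v : Fin k → α | P (Fin.snoc v x)} := by
  simp only [card_filter]
  rw [← (Fin.snocEquiv fun _ => α).sum_comp, Fintype.sum_prod_type]
  rfl

theorem card_ballotWords_succ (r a b : ℕ) :
    #(ballotWords (k + 1) r a b) = #(ballotWords k r a b) +
      (if 0 < r ∧ a = b then #(ballotWords k (r - 1) a b) else 0) +
      (if 0 < a then #(ballotWords k r (a - 1) b) else 0) +
      (if 0 < b ∧ b ≤ a then #(ballotWords k r a (b - 1)) else 0) := by
  have fiber (x : Letter) (c : Prop) [Decidable c] (r' a' b' : ℕ)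
      (h : ∀ v, (Fin.snoc v x : Fin (k + 1) → Letter) ∈ ballotWords (k + 1) r a b ↔
        c ∧ v ∈ ballotWords k r' a' b') :
      #{v | (Fin.snoc v x : Fin (k + 1) → Letter) ∈ ballotWords (k + 1) r a b} =
        if c then #(ballotWords k r' a' b') else 0 := by
    split_ifs with hc <;> simp [h, hc]
  rw [← filter_univ_mem (ballotWords (k + 1) r a b), card_filter_snoc, Letter.sum_univ,
    fiber .outside True r a b, fiber .free (0 < r ∧ a = b) (r - 1) a b,
    fiber .opening (0 < a) r (a - 1) b, fiber .closing (0 < b ∧ b ≤ a) r a (b - 1), if_pos trivial]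
  all_goals
    intro v
    by_cases hv : IsBallotWord v <;>
      simp only [ballotWords, mem_filter, mem_univ, true_and, isBallotWord_snoc, height, hv,
        letterCount_snoc_last, reduceCtorEq, ↓reduceIte, add_zero, Int.sub_pos, Nat.cast_lt,
        IsEmpty.forall_iff, forall_const, and_self, and_true, false_and, and_false] <;> omega

def ballot (n b : ℕ) : ℤ :=
  n.choose b - if b = 0 then 0 else n.choose (b - 1)

theorem ballot_succ (m b : ℕ) :
    ballot (m + 1) b = ballot m b + if 0 < b then ballot m (b - 1) else 0 := by
  rcases b with _ | _ | b
  · simp [ballot]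
  · simp [ballot, Nat.choose_succ_succ]
  · simp only [ballot, Nat.choose_succ_succ, add_tsub_cancel_right, Nat.add_eq_zero_iff,
      one_ne_zero, and_false, if_false, Nat.succ_pos, if_true]
    push_cast
    ring

theorem ballot_central (b : ℕ) : ballot (2 * b + 1) (b + 1) = 0 := by
  have h := Nat.choose_symm_half b
  simp only [ballot, add_tsub_cancel_right, Nat.add_eq_zero_iff, one_ne_zero, and_false, if_false]
  rw [h]
  ring

def ballotWordFormula (k r a b : ℕ) : ℤ :=
  if b ≤ a then k.choose (r + a + b) * ballot (r + a + b) b else 0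

theorem ballotWordFormula_of_le {k r a b n : ℕ} (hba : b ≤ a) (hn : r + a + b = n) :
    ballotWordFormula k r a b = k.choose n * ballot n b := by
  subst hn
  exact if_pos hba

theorem ballotWordFormula_succ (k r a b : ℕ) :
    ballotWordFormula (k + 1) r a b = ballotWordFormula k r a b +
      (if 0 < r ∧ a = b then ballotWordFormula k (r - 1) a b else 0) +
      (if 0 < a then ballotWordFormula k r (a - 1) b else 0) +
      (if 0 < b ∧ b ≤ a then ballotWordFormula k r a (b - 1) else 0) := by
  by_cases hba : b ≤ a
  swap
  · simp [ballotWordFormula, hba, show ¬ b ≤ a - 1 by omega]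
  rcases hm : r + a + b with _ | m
  · obtain ⟨rfl, rfl, rfl⟩ : r = 0 ∧ a = 0 ∧ b = 0 := by omega
    simp [ballotWordFormula]
  have hfree : (if 0 < r ∧ a = b then ballotWordFormula k (r - 1) a b else 0) =
      k.choose m * if 0 < r ∧ a = b then ballot m b else 0 := by
    split_ifs
    · exact ballotWordFormula_of_le (n := m) hba (by omega)
    · exact (mul_zero _).symm
  have hopening : (if 0 < a then ballotWordFormula k r (a - 1) b else 0) =
      k.choose m * if b < a then ballot m b else 0 := by
    by_cases h : b < a
    · rw [if_pos (by omega), if_pos h, ballotWordFormula_of_le (n := m) (by omega) (by omega)]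
    · rw [if_neg h, mul_zero, ite_eq_right_iff]
      exact fun _ => if_neg (by omega)
  have hclosing : (if 0 < b ∧ b ≤ a then ballotWordFormula k r a (b - 1) else 0) =
      k.choose m * if 0 < b then ballot m (b - 1) else 0 := by
    by_cases h : 0 < b
    · rw [if_pos ⟨h, hba⟩, if_pos h, ballotWordFormula_of_le (n := m) (by omega) (by omega)]
    · rw [if_neg (by omega), if_neg h, mul_zero]
  -- if `a = b` and `r = 0`, only a closing letter can come last, and indeed `ballot m b = 0`
  have hlevel : (if 0 < r ∧ a = b then ballot m b else 0) + (if b < a then ballot m b else 0) =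
      ballot m b := by
    by_cases hr : 0 < r ∧ a = b
    · simp [hr]
    by_cases hab : b < a
    · simp [hr, hab]
    obtain ⟨c, rfl, rfl⟩ : ∃ c, b = c + 1 ∧ m = 2 * c + 1 := ⟨b - 1, by omega, by omega⟩
    simp [hr, hab, ballot_central]
  rw [hfree, hopening, hclosing, ballotWordFormula_of_le hba hm, ballotWordFormula_of_le hba hm,
    Nat.choose_succ_succ', ballot_succ]
  push_cast
  linear_combination -(k.choose m : ℤ) * hlevel

theorem card_ballotWords (k r a b : ℕ) :
    (#(ballotWords k r a b) : ℤ) = ballotWordFormula k r a b := by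
  induction k generalizing r a b with
  | zero =>
    have hword (w : Fin 0 → Letter) : IsBallotWord w :=
      ⟨fun i hi => by simp [Nat.le_zero.mp hi, height_zero], fun j => j.elim0⟩
    by_cases h : r = 0 ∧ a = 0 ∧ b = 0
    · obtain ⟨rfl, rfl, rfl⟩ := h
      simp [ballotWords, letterCount_zero, hword, ballotWordFormula, ballot]
    · rw [ballotWordFormula, Nat.choose_eq_zero_of_lt (by omega), Nat.cast_zero, zero_mul, ite_self,
        Nat.cast_eq_zero, card_eq_zero, ballotWords, filter_eq_empty_iff]
      rintro w - ⟨-, hr, ha, hb⟩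
      rw [letterCount_zero] at hr ha hb
      omega
  | succ k ih =>
    rw [card_ballotWords_succ, ballotWordFormula_succ]
    push_cast [apply_ite (Nat.cast : ℕ → ℤ), ih]
    rfl

section WordOfDiagram

variable {D : Finset (Fin k)} {M : Finset (Fin k × Fin k)}

noncomputable def wordOf (D : Finset (Fin k)) (M : Finset (Fin k × Fin k)) (i : Fin k) : Letter :=
  if i ∉ D then .outside
  else if ∃ p ∈ M, p.1 = i then .opening
  else if ∃ p ∈ M, p.2 = i then .closing
  else .free

theorem wordOf_eq_outside {i : Fin k} : wordOf D M i = .outside ↔ i ∉ D := by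
  unfold wordOf
  split_ifs <;> simp_all

theorem wordOf_eq_free {i : Fin k} :
    wordOf D M i = .free ↔ i ∈ D ∧ ∀ p ∈ M, i ≠ p.1 ∧ i ≠ p.2 := by
  unfold wordOf
  constructor
  · intro h
    split_ifs at h with hD h₁ h₂
    exact ⟨hD, fun p hp => ⟨fun e => h₁ ⟨p, hp, e.symm⟩, fun e => h₂ ⟨p, hp, e.symm⟩⟩⟩
  · rintro ⟨hD, hfree⟩
    rw [if_neg (not_not.2 hD), if_neg, if_neg]
    · rintro ⟨p, hp, rfl⟩
      exact (hfree p hp).2 rfl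
    · rintro ⟨p, hp, rfl⟩
      exact (hfree p hp).1 rfl

theorem wordOf_eq_opening (H : IsCupDiagramOn D M) {i : Fin k} :
    wordOf D M i = .opening ↔ ∃ p ∈ M, p.1 = i := by
  unfold wordOf
  constructor
  · intro h
    split_ifs at h with hD h₁
    exact h₁
  · rintro ⟨p, hp, rfl⟩
    rw [if_neg (not_not.2 (H.fst_mem hp)), if_pos ⟨p, hp, rfl⟩]

theorem wordOf_eq_closing (H : IsCupDiagramOn D M) {i : Fin k} :
    wordOf D M i = .closing ↔ ∃ p ∈ M, p.2 = i := by
  unfold wordOf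
  constructor
  · intro h
    split_ifs at h with hD h₁ h₂
    exact h₂
  · rintro ⟨p, hp, rfl⟩
    rw [if_neg (not_not.2 (H.snd_mem hp)), if_neg, if_pos ⟨p, hp, rfl⟩]
    rintro ⟨q, hq, hqp⟩
    exact H.fst_ne_snd hq hp hqp

theorem letterCount_free_wordOf :
    letterCount .free (wordOf D M) k = #{x ∈ D | ∀ p ∈ M, x ≠ p.1 ∧ x ≠ p.2} := by
  rw [letterCount_of_le _ _ le_rfl]
  congr 1
  ext i
  simp [wordOf_eq_free]

theorem letterCount_opening_wordOf (H : IsCupDiagramOn D M) (t : ℕ) :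
    letterCount .opening (wordOf D M) t = #{p ∈ M | (p.1 : ℕ) < t} := by
  have himage : ({j | (j : ℕ) < t ∧ wordOf D M j = .opening} : Finset (Fin k)) =
      {p ∈ M | (p.1 : ℕ) < t}.image Prod.fst := by
    ext j
    simp only [mem_filter, mem_univ, true_and, mem_image, wordOf_eq_opening H]
    constructor
    · rintro ⟨hj, p, hp, rfl⟩
      exact ⟨p, ⟨hp, hj⟩, rfl⟩
    · rintro ⟨p, ⟨hp, hj⟩, rfl⟩
      exact ⟨hj, p, hp, rfl⟩
  rw [letterCount, himage, card_image_of_injOn]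
  exact fun p hp q hq => H.eq_of_fst_eq (mem_filter.mp hp).1 (mem_filter.mp hq).1

theorem letterCount_closing_wordOf (H : IsCupDiagramOn D M) (t : ℕ) :
    letterCount .closing (wordOf D M) t = #{p ∈ M | (p.2 : ℕ) < t} := by
  have himage : ({j | (j : ℕ) < t ∧ wordOf D M j = .closing} : Finset (Fin k)) =
      {p ∈ M | (p.2 : ℕ) < t}.image Prod.snd := by
    ext j
    simp only [mem_filter, mem_univ, true_and, mem_image, wordOf_eq_closing H]
    constructor
    · rintro ⟨hj, p, hp, rfl⟩
      exact ⟨p, ⟨hp, hj⟩, rfl⟩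
    · rintro ⟨p, ⟨hp, hj⟩, rfl⟩
      exact ⟨hj, p, hp, rfl⟩
  rw [letterCount, himage, card_image_of_injOn]
  exact fun p hp q hq => H.eq_of_snd_eq (mem_filter.mp hp).1 (mem_filter.mp hq).1

def arcsOver (M : Finset (Fin k × Fin k)) (t : ℕ) : Finset (Fin k × Fin k) :=
  {p ∈ M | (p.1 : ℕ) < t ∧ t ≤ p.2}

theorem height_wordOf (H : IsCupDiagramOn D M) (t : ℕ) :
    height (wordOf D M) t = #(arcsOver M t) := by
  have hsplit := card_filter_add_card_filter_not
    (s := {p ∈ M | (p.1 : ℕ) < t}) (fun p : Fin k × Fin k => (p.2 : ℕ) < t)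
  have hclosed : ({p ∈ {p ∈ M | (p.1 : ℕ) < t} | (p.2 : ℕ) < t}) = {p ∈ M | (p.2 : ℕ) < t} := by
    ext p
    simp only [mem_filter]
    constructor
    · exact fun h => ⟨h.1.1, h.2⟩
    · exact fun h => ⟨⟨h.1, by have := H.fst_lt_snd h.1; omega⟩, h.2⟩
  have hopen : ({p ∈ {p ∈ M | (p.1 : ℕ) < t} | ¬(p.2 : ℕ) < t}) = arcsOver M t := by
    ext p
    simp only [arcsOver, mem_filter, not_lt, and_assoc]
  rw [hclosed, hopen] at hsplit
  rw [height, letterCount_opening_wordOf H, letterCount_closing_wordOf H, ← hsplit]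
  push_cast
  ring

theorem arcsOver_eq_empty_of_le (M : Finset (Fin k × Fin k)) {t : ℕ} (ht : k ≤ t) :
    arcsOver M t = ∅ := by
  ext p
  simp only [arcsOver, mem_filter, notMem_empty, iff_false, not_and, not_le]
  exact fun _ _ => by omega

theorem arcsOver_eq_empty_of_unmatched (H : IsCupDiagramOn D M) {x : Fin k} (hx : x ∈ D)
    (hfree : ∀ p ∈ M, x ≠ p.1 ∧ x ≠ p.2) : arcsOver M x = ∅ := by
  ext p
  simp only [arcsOver, mem_filter, notMem_empty, iff_false, not_and, not_le]
  intro hp h₁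
  by_contra! h₂
  have hne := (hfree p hp).2
  exact H.not_between_of_unmatched hx hfree hp ⟨h₁, by omega⟩

theorem snd_lt_of_mem_arcsOver_fst (H : IsCupDiagramOn D M) {p q : Fin k × Fin k} (hp : p ∈ M)
    (hq : q ∈ arcsOver M p.1) : q.1 < p.1 ∧ p.2 < q.2 := by
  simp only [arcsOver, mem_filter] at hq
  obtain ⟨hq, h₁, h₂⟩ := hq
  have h₂ : p.1 < q.2 := lt_of_le_of_ne h₂ (H.fst_ne_snd hp hq)
  exact ⟨h₁, H.snd_lt_snd_of_fst_lt_of_lt_snd hq hp h₁ h₂⟩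

theorem arcsOver_fst_ssubset (H : IsCupDiagramOn D M) {p : Fin k × Fin k} (hp : p ∈ M) {t : ℕ}
    (h₁ : (p.1 : ℕ) < t) (h₂ : t ≤ p.2) : arcsOver M p.1 ⊂ arcsOver M t := by
  refine ssubset_of_subset_not_subset (fun q hq => ?_) fun hsub => ?_
  · obtain ⟨hq₁, hq₂⟩ := snd_lt_of_mem_arcsOver_fst H hp hq
    simp only [arcsOver, mem_filter] at hq ⊢
    exact ⟨hq.1, by omega, by omega⟩
  · have := hsub (by simp [arcsOver, hp, h₁, h₂] : p ∈ arcsOver M t)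
    simp [arcsOver] at this

theorem arcsOver_snd_succ (H : IsCupDiagramOn D M) {p : Fin k × Fin k} (hp : p ∈ M) :
    arcsOver M ((p.2 : ℕ) + 1) = arcsOver M p.1 := by
  have hp₁₂ := H.fst_lt_snd hp
  ext q
  constructor
  · intro hq
    simp only [arcsOver, mem_filter] at hq ⊢
    obtain ⟨hq, h₁, h₂⟩ := hq
    refine ⟨hq, ?_, by omega⟩
    by_contra! hle
    have hne₁ : q.1 ≠ p.1 := fun h => by
      rw [H.eq_of_fst_eq hq hp h] at h₂
      omega
    have hne₂ : q.1 ≠ p.2 := H.fst_ne_snd hq hp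
    have := H.snd_lt_snd_of_fst_lt_of_lt_snd hp hq (by omega) (by omega)
    omega
  · intro hq
    obtain ⟨hq₁, hq₂⟩ := snd_lt_of_mem_arcsOver_fst H hp hq
    simp only [arcsOver, mem_filter] at hq ⊢
    exact ⟨hq.1, by omega, by omega⟩

theorem isBallotWord_wordOf (H : IsCupDiagramOn D M) : IsBallotWord (wordOf D M) := by
  refine ⟨fun i _ => by rw [height_wordOf H]; positivity, fun j hj => ?_⟩
  obtain ⟨hjD, hfree⟩ := wordOf_eq_free.mp hj
  rw [height_wordOf H, arcsOver_eq_empty_of_unmatched H hjD hfree, card_empty, Nat.cast_zero]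

theorem height_wordOf_last (H : IsCupDiagramOn D M) : height (wordOf D M) k = 0 := by
  rw [height_wordOf H, arcsOver_eq_empty_of_le M le_rfl, card_empty, Nat.cast_zero]

end WordOfDiagram

section ArcsOfWord

variable {w : Fin k → Letter} {p q : Fin k × Fin k}

/-- `(i, j)` is an arc when `w j` is the bracket matching `w i`: just after `j` the height first
returns to its level before `i`. -/
noncomputable def arcsOf (w : Fin k → Letter) : Finset (Fin k × Fin k) :=
  {p | w p.1 = .opening ∧ p.1 < p.2 ∧ height w ((p.2 : ℕ) + 1) = height w p.1 ∧
    ∀ t : ℕ, (p.1 : ℕ) < t → t ≤ p.2 → height w p.1 < height w t}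

theorem mem_arcsOf : p ∈ arcsOf w ↔ w p.1 = .opening ∧ p.1 < p.2 ∧
    height w ((p.2 : ℕ) + 1) = height w p.1 ∧
    ∀ t : ℕ, (p.1 : ℕ) < t → t ≤ p.2 → height w p.1 < height w t := by
  simp [arcsOf]

theorem apply_snd_of_mem_arcsOf (hp : p ∈ arcsOf w) : w p.2 = .closing := by
  obtain ⟨-, hlt, hret, hmin⟩ := mem_arcsOf.1 hp
  have hdrop := hmin p.2 hlt le_rfl
  have hstep := height_succ w p.2.isLt
  rw [Fin.eta] at hstep
  cases h : w p.2 <;> simp only [h, Letter.step] at hstep <;> first | rfl | omega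

theorem eq_of_mem_arcsOf_of_fst_eq (hp : p ∈ arcsOf w) (hq : q ∈ arcsOf w) (h : p.1 = q.1) :
    p = q := by
  obtain ⟨-, hp₁₂, hpret, hpmin⟩ := mem_arcsOf.1 hp
  obtain ⟨-, hq₁₂, hqret, hqmin⟩ := mem_arcsOf.1 hq
  rcases lt_trichotomy p.2 q.2 with hlt | heq | hlt
  · have := hqmin ((p.2 : ℕ) + 1) (by omega) (by omega)
    rw [hpret, h] at this
    exact absurd this (lt_irrefl _)
  · exact Prod.ext h heq
  · have := hpmin ((q.2 : ℕ) + 1) (by omega) (by omega)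
    rw [hqret, h] at this
    exact absurd this (lt_irrefl _)

theorem eq_of_mem_arcsOf_of_snd_eq (hp : p ∈ arcsOf w) (hq : q ∈ arcsOf w) (h : p.2 = q.2) :
    p = q := by
  obtain ⟨-, hp₁₂, hpret, hpmin⟩ := mem_arcsOf.1 hp
  obtain ⟨-, hq₁₂, hqret, hqmin⟩ := mem_arcsOf.1 hq
  rw [h] at hpret
  rcases lt_trichotomy p.1 q.1 with hlt | heq | hlt
  · have := hpmin q.1 hlt (by omega)
    omega
  · exact Prod.ext heq h
  · have := hqmin p.1 hlt (by omega)
    omega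

theorem not_crossing_of_mem_arcsOf (hp : p ∈ arcsOf w) (hq : q ∈ arcsOf w) :
    ¬(p.1 < q.1 ∧ q.1 < p.2 ∧ p.2 < q.2) := by
  rintro ⟨h₁, h₂, h₃⟩
  obtain ⟨-, -, hpret, hpmin⟩ := mem_arcsOf.1 hp
  obtain ⟨-, -, -, hqmin⟩ := mem_arcsOf.1 hq
  have := hpmin q.1 h₁ h₂.le
  have := hqmin ((p.2 : ℕ) + 1) (by omega) (by omega)
  omega

theorem card_arcsOf_le : #(arcsOf w) ≤ letterCount .opening w k := by
  rw [letterCount_of_le _ _ le_rfl]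
  refine card_le_card_of_injOn Prod.fst (fun p hp => ?_) fun p hp q hq =>
    eq_of_mem_arcsOf_of_fst_eq (mem_coe.1 hp) (mem_coe.1 hq)
  simpa using (mem_arcsOf.1 (mem_coe.1 hp)).1

variable {D : Finset (Fin k)} {M : Finset (Fin k × Fin k)}

theorem subset_arcsOf_wordOf (H : IsCupDiagramOn D M) : M ⊆ arcsOf (wordOf D M) := by
  intro p hp
  refine mem_arcsOf.2 ⟨(wordOf_eq_opening H).2 ⟨p, hp, rfl⟩, H.fst_lt_snd hp, ?_, fun t h₁ h₂ => ?_⟩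
  · rw [height_wordOf H, height_wordOf H, arcsOver_snd_succ H hp]
  · rw [height_wordOf H, height_wordOf H]
    exact_mod_cast card_lt_card (arcsOver_fst_ssubset H hp h₁ h₂)

theorem arcsOf_wordOf (H : IsCupDiagramOn D M) : arcsOf (wordOf D M) = M := by
  refine (eq_of_subset_of_card_le (subset_arcsOf_wordOf H) ?_).symm
  refine card_arcsOf_le.trans_eq ?_
  rw [letterCount_opening_wordOf H, filter_true_of_mem fun p _ => p.1.isLt]

theorem exists_mem_arcsOf_of_opening (hw : IsBallotWord w) (hk : height w k = 0) {i : Fin k}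
    (hi : w i = .opening) : ∃ j, (i, j) ∈ arcsOf w := by
  have hex : ∃ t, (i : ℕ) < t ∧ t ≤ k ∧ height w t ≤ height w i :=
    ⟨k, i.isLt, le_rfl, hk ▸ hw.1 i i.isLt.le⟩
  obtain ⟨hm₁, hmk, hm⟩ : (i : ℕ) < Nat.find hex ∧ Nat.find hex ≤ k ∧
      height w (Nat.find hex) ≤ height w i := Nat.find_spec hex
  have hmin : ∀ t, (i : ℕ) < t → t < Nat.find hex → height w i < height w t := fun t h₁ h₂ => by
    have := Nat.find_min hex h₂
    simp only [not_and, not_le] at this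
    exact this h₁ (by omega)
  have hup : height w ((i : ℕ) + 1) = height w i + 1 := by
    simpa [Letter.step, hi] using height_succ w i.isLt
  have hm₂ : (i : ℕ) + 1 < Nat.find hex := by
    refine lt_of_le_of_ne hm₁ fun h => ?_
    rw [← h, hup] at hm
    omega
  obtain ⟨j, hj⟩ : ∃ j, Nat.find hex = j + 1 := ⟨Nat.find hex - 1, by omega⟩
  have hjk : j < k := by omega
  have hdown : height w j - 1 ≤ height w (j + 1) := by
    have := (w ⟨j, hjk⟩).neg_one_le_step
    rw [height_succ w hjk]
    omega
  have hj' := hmin j (by omega) (by omega)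
  refine ⟨⟨j, hjk⟩, mem_arcsOf.2 ⟨hi, show (i : ℕ) < j by omega, ?_, fun t h₁ h₂ => ?_⟩⟩
  · show height w (j + 1) = height w i
    rw [hj] at hm
    exact le_antisymm hm (by omega)
  · exact hmin t h₁ (by simp only at h₂; omega)

theorem exists_mem_arcsOf_of_closing (hw : IsBallotWord w) (hk : height w k = 0) {j : Fin k}
    (hj : w j = .closing) : ∃ i, (i, j) ∈ arcsOf w := by
  have hsub : (arcsOf w).image Prod.snd ⊆ ({j | w j = .closing} : Finset (Fin k)) := by
    simpa [subset_iff] using fun j i hij => apply_snd_of_mem_arcsOf hij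
  have hcard : #({j | w j = .closing} : Finset (Fin k)) ≤ #((arcsOf w).image Prod.snd) := by
    rw [card_image_of_injOn fun p hp q hq => eq_of_mem_arcsOf_of_snd_eq hp hq,
      ← letterCount_of_le _ _ le_rfl]
    have hbal : letterCount .closing w k = letterCount .opening w k := by
      simp only [height] at hk
      omega
    rw [hbal, letterCount_of_le _ _ le_rfl]
    refine card_le_card_of_surjOn Prod.fst fun i hi => ?_
    obtain ⟨j, hj⟩ := exists_mem_arcsOf_of_opening hw hk (by simpa using hi)
    exact ⟨(i, j), hj, rfl⟩
  have hmem : j ∈ ({j | w j = .closing} : Finset (Fin k)) := by simpa using hj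
  rw [← eq_of_subset_of_card_le hsub hcard] at hmem
  simpa using hmem

def support (w : Fin k → Letter) : Finset (Fin k) :=
  {i | w i ≠ .outside}

theorem free_iff_unmatched (hw : IsBallotWord w) (hk : height w k = 0) {x : Fin k} :
    w x = .free ↔ x ∈ support w ∧ ∀ p ∈ arcsOf w, x ≠ p.1 ∧ x ≠ p.2 := by
  constructor
  · intro hx
    refine ⟨by simp [support, hx], fun p hp => ⟨?_, ?_⟩⟩
    · rintro rfl
      cases hx.symm.trans (mem_arcsOf.1 hp).1
    · rintro rfl
      cases hx.symm.trans (apply_snd_of_mem_arcsOf hp)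
  · rintro ⟨hx, hun⟩
    cases h : w x
    · simp [support, h] at hx
    · rfl
    · obtain ⟨j, hj⟩ := exists_mem_arcsOf_of_opening hw hk h
      exact absurd rfl (hun _ hj).1
    · obtain ⟨i, hi⟩ := exists_mem_arcsOf_of_closing hw hk h
      exact absurd rfl (hun _ hi).2

theorem isCupDiagramOn_arcsOf (hw : IsBallotWord w) (hk : height w k = 0) :
    IsCupDiagramOn (support w) (arcsOf w) := by
  refine ⟨fun p hp => ?_, fun p hp => (mem_arcsOf.1 hp).2.1, fun p hp q hq hpq => ?_,
    fun p hp q hq => not_crossing_of_mem_arcsOf hp hq, fun x hx hun p hp hxp => ?_⟩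
  · simp [support, (mem_arcsOf.1 hp).1, apply_snd_of_mem_arcsOf hp]
  · have hp₁ := (mem_arcsOf.1 hp).1
    have hq₁ := (mem_arcsOf.1 hq).1
    have hp₂ := apply_snd_of_mem_arcsOf hp
    have hq₂ := apply_snd_of_mem_arcsOf hq
    refine ⟨fun h => hpq (eq_of_mem_arcsOf_of_fst_eq hp hq h), fun h => ?_, fun h => ?_,
      fun h => hpq (eq_of_mem_arcsOf_of_snd_eq hp hq h)⟩
    · rw [h, hq₂] at hp₁
      cases hp₁
    · rw [h, hq₁] at hp₂
      cases hp₂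
  · have hfree := (free_iff_unmatched hw hk).2 ⟨hx, hun⟩
    obtain ⟨-, -, -, hmin⟩ := mem_arcsOf.1 hp
    have := hmin x hxp.1 hxp.2.le
    have := hw.2 x hfree
    have := hw.1 p.1 p.1.isLt.le
    omega

theorem wordOf_arcsOf (hw : IsBallotWord w) (hk : height w k = 0) :
    wordOf (support w) (arcsOf w) = w := by
  have H := isCupDiagramOn_arcsOf hw hk
  funext i
  cases h : w i
  · exact wordOf_eq_outside.2 (by simp [support, h])
  · exact wordOf_eq_free.2 ((free_iff_unmatched hw hk).1 h)
  · obtain ⟨j, hj⟩ := exists_mem_arcsOf_of_opening hw hk h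
    exact (wordOf_eq_opening H).2 ⟨_, hj, rfl⟩
  · obtain ⟨j, hj⟩ := exists_mem_arcsOf_of_closing hw hk h
    exact (wordOf_eq_closing H).2 ⟨_, hj, rfl⟩

theorem support_wordOf {D : Finset (Fin k)} {M : Finset (Fin k × Fin k)} :
    support (wordOf D M) = D := by
  ext i
  simp [support, wordOf_eq_outside]

end ArcsOfWord

theorem card_cupDiagrams_eq_card_words (k r : ℕ) :
    #{DM : Finset (Fin k) × Finset (Fin k × Fin k) | IsCupDiagramOn DM.1 DM.2 ∧
      #(DM.1.filter fun x => ∀ p ∈ DM.2, x ≠ p.1 ∧ x ≠ p.2) = r} =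
    #{w : Fin k → Letter | IsBallotWord w ∧ height w k = 0 ∧ letterCount .free w k = r} := by
  refine card_nbij' (fun DM => wordOf DM.1 DM.2) (fun w => (support w, arcsOf w)) ?_ ?_ ?_ ?_
  · rintro ⟨D, M⟩ hDM
    simp only [coe_filter, mem_univ, true_and, Set.mem_ofPred_eq] at hDM ⊢
    exact ⟨isBallotWord_wordOf hDM.1, height_wordOf_last hDM.1,
      letterCount_free_wordOf.trans hDM.2⟩
  · intro w hw
    simp only [coe_filter, mem_univ, true_and, Set.mem_ofPred_eq] at hw ⊢
    obtain ⟨hb, hk, hr⟩ := hw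
    refine ⟨isCupDiagramOn_arcsOf hb hk, ?_⟩
    rw [← hr, ← letterCount_free_wordOf, wordOf_arcsOf hb hk]
  · rintro ⟨D, M⟩ hDM
    simp only [coe_filter, mem_univ, true_and, Set.mem_ofPred_eq] at hDM
    exact Prod.ext support_wordOf (arcsOf_wordOf hDM.1)
  · intro w hw
    simp only [coe_filter, mem_univ, true_and, Set.mem_ofPred_eq] at hw
    exact wordOf_arcsOf hw.1 hw.2.1

theorem card_words_eq_sum (k r : ℕ) :
    #{w : Fin k → Letter | IsBallotWord w ∧ height w k = 0 ∧ letterCount .free w k = r} =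
      ∑ a ∈ range (k + 1), #(ballotWords k r a a) := by
  rw [card_eq_sum_card_fiberwise (f := fun w => letterCount .opening w k) (t := range (k + 1))]
  · refine sum_congr rfl fun a _ => congr_arg card ?_
    ext w
    simp only [ballotWords, mem_filter, mem_univ, true_and, and_assoc]
    refine and_congr_right fun _ => ?_
    rw [height, sub_eq_zero, Nat.cast_inj]
    omega
  · intro w _
    rw [mem_coe, mem_range, Nat.lt_succ_iff]
    dsimp only
    rw [letterCount_of_le _ _ le_rfl]
    exact (card_le_univ _).trans_eq (Fintype.card_fin k)

theorem ballotWordFormula_self (k r a : ℕ) :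
    ballotWordFormula k r a a = k.choose (r + 2 * a) * ballot (r + 2 * a) a := by
  simp [ballotWordFormula, two_mul, add_assoc]

end CupDiagram

theorem symmetric_motzkin_diagram_count_general (k r : ℕ) :
    (((Finset.univ.filter
        fun DM : Finset (Fin k) × Finset (Fin k × Fin k) =>
          IsCupDiagramOn DM.1 DM.2 ∧
          (DM.1.filter fun x => ∀ p ∈ DM.2, x ≠ p.1 ∧ x ≠ p.2).card = r).card : ℤ))
      = ∑ c ∈ Finset.range ((k - r) / 2 + 1),
          (Nat.choose k (r + 2 * c) : ℤ) *
            ((Nat.choose (r + 2 * c) c : ℤ) -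
              (if c = 0 then 0 else Nat.choose (r + 2 * c) (c - 1))) := by
  rw [CupDiagram.card_cupDiagrams_eq_card_words, CupDiagram.card_words_eq_sum, Nat.cast_sum]
  simp only [CupDiagram.card_ballotWords, CupDiagram.ballotWordFormula_self]
  refine (sum_subset (range_subset_range.2 (by omega)) fun c hc hc' => ?_).symm
  simp only [mem_range] at hc hc'
  rw [Nat.choose_eq_zero_of_lt (by omega), Nat.cast_zero, zero_mul]

/-- The number of pairs `(D, M)` of a subset `D ⊆ Fin k` and a cup diagram `M`
on `D` leaving exactly `r` elements of `D` unmatched equals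
`Σ_{c=0}^{⌊(k−r)/2⌋} C(k, r+2c)·(C(r+2c, c) − C(r+2c, c−1))`, with the
convention `C(n, −1) = 0`.  Such pairs are in bijection with the vertically
symmetric Motzkin diagrams on `k` vertices of rank `r`. -/
theorem symmetric_motzkin_diagram_count (k r : ℕ) (hr : r ≤ k) :
    (((Finset.univ.filter
        fun DM : Finset (Fin k) × Finset (Fin k × Fin k) =>
          IsCupDiagramOn DM.1 DM.2 ∧
          (DM.1.filter fun x => ∀ p ∈ DM.2, x ≠ p.1 ∧ x ≠ p.2).card = r).card : ℤ))
      = ∑ c ∈ Finset.range ((k - r) / 2 + 1),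
          (Nat.choose k (r + 2 * c) : ℤ) *
            ((Nat.choose (r + 2 * c) c : ℤ) -
              (if c = 0 then 0 else Nat.choose (r + 2 * c) (c - 1))) :=
  symmetric_motzkin_diagram_count_general k r
end
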